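/- arXiv:1705.06423 — 3 statements merged into one kernel-verified Lean document; each statement's English description precedes it below -/
import Mathlib

section
/- Let Q be any subposet (a subset with the induced order) of the poset P_0 that contains at least two chains of length 3 (that is, two four-element chains), one of which contains a or b and another of which contains a′ or b′. Then Q is not shellable, i.e., the order complex Δ(Q) is not shellable. -/
open Classical

set_option maxHeartbeats 1000000

/-- A finite multigraph without loops: `fst e` and `snd e` are the two (distinct)
endpoints of the edge `e`. -/
structure Multigraph where
  V : Type
  E : Type
  [fintypeV : Fintype V]
  [decEqV : DecidableEq V]
  [fintypeE : Fintype E]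
  [decEqE : DecidableEq E]
  fst : E → V
  snd : E → V
  no_loop : ∀ e, fst e ≠ snd e

attribute [instance] Multigraph.fintypeV Multigraph.decEqV Multigraph.fintypeE Multigraph.decEqE

namespace Multigraph

variable (G : Multigraph)

/-- The ground set: vertices together with edges. -/
abbrev El : Type := G.V ⊕ G.E

/-- Two edges have the same (unordered) pair of endpoints. -/
def sameEnds (e e' : G.E) : Prop :=
  (G.fst e = G.fst e' ∧ G.snd e = G.snd e') ∨ (G.fst e = G.snd e' ∧ G.snd e = G.fst e')

/-- An edge is a multiple edge if some other edge has the same endpoints. -/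
def Multiple (e : G.E) : Prop := ∃ e', e' ≠ e ∧ G.sameEnds e e'

/-- A simple graph has no multiple edges. -/
def Simple : Prop := ∀ e, ¬ G.Multiple e

/-- A bundle: a maximal set of multiple edges with the same pair of endpoints. -/
def IsBundle (B : Set G.E) : Prop := ∃ e, G.Multiple e ∧ B = {e' | G.sameEnds e e'}

/-- Adjacency of vertices. -/
def adj (u v : G.V) : Prop :=
  ∃ e, (G.fst e = u ∧ G.snd e = v) ∨ (G.fst e = v ∧ G.snd e = u)

def reachable : G.V → G.V → Prop := Relation.ReflTransGen G.adj

def Connected : Prop := Nonempty G.V ∧ ∀ u v : G.V, G.reachable u v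

/-- Existence of a walk of length exactly `k`. -/
def reachN (G : Multigraph) : ℕ → G.V → G.V → Prop
  | 0, u, v => u = v
  | k + 1, u, v => ∃ w, G.adj u w ∧ G.reachN k w v

/-- Graph distance. -/
noncomputable def dist (u v : G.V) : ℕ := sInf {k | G.reachN k u v}

def adjOn (W : Set G.V) (u v : G.V) : Prop := u ∈ W ∧ v ∈ W ∧ G.adj u v

/-- The set `W` of vertices induces a connected subgraph. -/
def ConnectedOn (W : Set G.V) : Prop :=
  ∀ u ∈ W, ∀ w ∈ W, Relation.ReflTransGen (G.adjOn W) u w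

/-- The subset of the ground set representing the whole graph:
all vertices together with all multiple edges. -/
def topSet : Set G.El := {x | ∀ e, x = Sum.inr e → G.Multiple e}

/-- `S ⊆ C_G` represents a semi-induced subgraph: its edges are multiple edges with both
endpoints among its vertices, and between any two of its vertices joined by a bundle of `G`
it contains at least one edge of the bundle (simple edges are implicitly included). -/
def SemiInduced (S : Set G.El) : Prop :=
  (∀ e, Sum.inr e ∈ S → G.Multiple e ∧ Sum.inl (G.fst e) ∈ S ∧ Sum.inl (G.snd e) ∈ S) ∧
  (∀ e, G.Multiple e → Sum.inl (G.fst e) ∈ S → Sum.inl (G.snd e) ∈ S →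
    ∃ e', G.sameEnds e e' ∧ Sum.inr e' ∈ S)

/-- Adjacency of two vertices inside the semi-induced subgraph represented by `S`. -/
def adjIn (S : Set G.El) (u v : G.V) : Prop :=
  Sum.inl u ∈ S ∧ Sum.inl v ∈ S ∧
    ∃ e, ((G.fst e = u ∧ G.snd e = v) ∨ (G.fst e = v ∧ G.snd e = u)) ∧
      (G.Multiple e → Sum.inr e ∈ S)

/-- The connected component of the vertex `v` inside the semi-induced subgraph `S`,
as a subset of the ground set. -/
def componentIn (S : Set G.El) (v : G.V) : Set G.El :=
  {x | (∃ u, x = Sum.inl u ∧ Relation.ReflTransGen (G.adjIn S) v u) ∨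
       (∃ e, x = Sum.inr e ∧ Sum.inr e ∈ S ∧ Relation.ReflTransGen (G.adjIn S) v (G.fst e))}

/-- `S` is an `A`-even semi-induced subgraph. -/
def AEvenMember (A S : Set G.El) : Prop :=
  G.SemiInduced S ∧ ∀ v, Sum.inl v ∈ S → Even ((G.componentIn S v ∩ A).ncard)

/-- `A` is an admissible collection for `G`. -/
def Admissible (A : Set G.El) : Prop :=
  (∀ e, Sum.inr e ∈ A → G.Multiple e) ∧
  (∀ v : G.V, Even ({u : G.V | G.reachable v u ∧ Sum.inl u ∈ A}.ncard)) ∧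
  (∀ v : G.V, (∀ e, (G.fst e = v ∨ G.snd e = v) → ¬ G.Multiple e) → Sum.inl v ∈ A) ∧
  (∀ e, G.Multiple e →
    (∃ e', G.sameEnds e e' ∧ Sum.inr e' ∈ A) ∧
      Even ({e' | G.sameEnds e e' ∧ Sum.inr e' ∈ A}.ncard))

end Multigraph

/-- The poset of `A`-even semi-induced subgraphs of `G`, including `∅` and `G` itself,
ordered by containment. -/
def EvenPoset (G : Multigraph) (A : Set G.El) : Type :=
  {S : Set G.El // S = ∅ ∨ S = G.topSet ∨ G.AEvenMember A S}

namespace EvenPoset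

instance (G : Multigraph) (A : Set G.El) : PartialOrder (EvenPoset G A) :=
  Subtype.partialOrder _

instance (G : Multigraph) (A : Set G.El) : BoundedOrder (EvenPoset G A) where
  top := ⟨G.topSet, Or.inr (Or.inl rfl)⟩
  le_top := by
    rintro ⟨S, hS⟩
    show S ⊆ G.topSet
    rcases hS with rfl | rfl | hS
    · exact Set.empty_subset _
    · exact subset_rfl
    · intro x hx
      intro e he
      subst he
      exact (hS.1.1 e hx).1
  bot := ⟨(∅ : Set G.El), Or.inl rfl⟩
  bot_le := by
    rintro ⟨S, hS⟩
    show (∅ : Set G.El) ⊆ S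
    exact Set.empty_subset _

end EvenPoset
/-- An isomorphism of multigraphs. -/
structure Multigraph.Iso (G H : Multigraph) where
  vEquiv : G.V ≃ H.V
  eEquiv : G.E ≃ H.E
  ends : ∀ e, (H.fst (eEquiv e) = vEquiv (G.fst e) ∧ H.snd (eEquiv e) = vEquiv (G.snd e)) ∨
              (H.fst (eEquiv e) = vEquiv (G.snd e) ∧ H.snd (eEquiv e) = vEquiv (G.fst e))

/-- The connected component of the vertex `v`, as a multigraph. -/
noncomputable def Multigraph.componentGraph (G : Multigraph) (v : G.V) : Multigraph where
  V := {u // G.reachable v u}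
  E := {e // G.reachable v (G.fst e)}
  fintypeV := Fintype.ofFinite _
  decEqV := fun a b => decidable_of_iff (a.1 = b.1) Subtype.ext_iff.symm
  fintypeE := Fintype.ofFinite _
  decEqE := fun a b => decidable_of_iff (a.1 = b.1) Subtype.ext_iff.symm
  fst := fun e => ⟨G.fst e.1, e.2⟩
  snd := fun e => ⟨G.snd e.1, Relation.ReflTransGen.tail e.2 ⟨e.1, Or.inl ⟨rfl, rfl⟩⟩⟩
  no_loop := fun e h => G.no_loop e.1 (congrArg Subtype.val h)

/-- A specification of a partial underlying induced subgraph (PI-graph) of `G`: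
a set `W` of vertices together with a set `R` of retained edges, such that every `G`-edge
between vertices of `W` has a parallel retained edge, and each bundle inside `W`
is either fully retained or replaced by a single (simple) edge. -/
structure PISpec (G : Multigraph) where
  W : Set G.V
  R : Set G.E
  endpoints_mem : ∀ e ∈ R, G.fst e ∈ W ∧ G.snd e ∈ W
  keeps : ∀ e, G.fst e ∈ W → G.snd e ∈ W → ∃ e' ∈ R, G.sameEnds e e'
  bundle_cond : ∀ e ∈ R, (∀ e', G.sameEnds e e' → e' ∈ R) ∨ (∀ e' ∈ R, G.sameEnds e e' → e' = e)

/-- The PI-graph determined by a `PISpec`. -/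
noncomputable def PISpec.toGraph {G : Multigraph} (s : PISpec G) : Multigraph where
  V := {v // v ∈ s.W}
  E := {e // e ∈ s.R}
  fintypeV := Fintype.ofFinite _
  decEqV := fun a b => decidable_of_iff (a.1 = b.1) Subtype.ext_iff.symm
  fintypeE := Fintype.ofFinite _
  decEqE := fun a b => decidable_of_iff (a.1 = b.1) Subtype.ext_iff.symm
  fst := fun e => ⟨G.fst e.1, (s.endpoints_mem e.1 e.2).1⟩
  snd := fun e => ⟨G.snd e.1, (s.endpoints_mem e.1 e.2).2⟩
  no_loop := fun e h => G.no_loop e.1 (congrArg Subtype.val h)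

section Shelling

variable {α : Type*}

/-- A finset is a chain of the poset. -/
def IsChainFinset [Preorder α] (s : Finset α) : Prop :=
  ∀ x ∈ s, ∀ y ∈ s, x ≤ y ∨ y ≤ x

/-- The order complex of a poset: the complex of its chains. -/
def orderComplex (α : Type*) [Preorder α] : Set (Finset α) := {s | IsChainFinset s}

/-- A facet (maximal face) of a simplicial complex. -/
def IsFacet (K : Set (Finset α)) (F : Finset α) : Prop :=
  F ∈ K ∧ ∀ F' ∈ K, F ⊆ F' → F = F'

/-- `l` is a shelling order of the complex `K` (nonpure shellability of Björner–Wachs):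
it enumerates the facets of `K` so that for every `k ≥ 1`, the intersection of the `k`-th
facet with the union of the earlier ones is pure of dimension `dim F_k - 1`. -/
def IsShelling (K : Set (Finset α)) (l : List (Finset α)) : Prop :=
  l.Nodup ∧ (∀ F, F ∈ l ↔ IsFacet K F) ∧
  ∀ k (hk : k < l.length), 1 ≤ k →
    ∀ S : Finset α, S ⊆ l.get ⟨k, hk⟩ →
      (∃ i, ∃ hi : i < l.length, i < k ∧ S ⊆ l.get ⟨i, hi⟩) →
      ∃ T : Finset α, T ⊆ l.get ⟨k, hk⟩ ∧ T.card + 1 = (l.get ⟨k, hk⟩).card ∧ S ⊆ T ∧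
        ∃ i, ∃ hi : i < l.length, i < k ∧ T ⊆ l.get ⟨i, hi⟩

def ComplexShellable (K : Set (Finset α)) : Prop := ∃ l, IsShelling K l

/-- A poset is shellable if its order complex is shellable. -/
def PosetShellable (α : Type*) [Preorder α] : Prop := ComplexShellable (orderComplex α)

end Shelling

/-- The family `𝒢*`: all graphs `G` such that the poset of `A`-even subgraphs is shellable
for every PI-graph `H` of `G` and every admissible collection `A` of `H`. -/
def GStar (G : Multigraph) : Prop :=
  ∀ s : PISpec G, ∀ A : Set s.toGraph.El,
    s.toGraph.Admissible A → PosetShellable (EvenPoset s.toGraph A)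
/-- A graph on vertex set `Fin n` with a bundle of `m` parallel edges between the
vertices `0` and `1`, and `k` further simple edges given by the endpoint functions `f, g`. -/
def mkGraph (n m k : ℕ) (hn : 2 ≤ n) (f g : ℕ → ℕ)
    (hf : ∀ i, i < k → f i < n) (hg : ∀ i, i < k → g i < n)
    (hfg : ∀ i, i < k → f i ≠ g i) : Multigraph where
  V := Fin n
  E := Fin m ⊕ Fin k
  fst := Sum.elim (fun _ => ⟨0, by omega⟩) (fun i => ⟨f i.1, hf i.1 i.2⟩)
  snd := Sum.elim (fun _ => ⟨1, by omega⟩) (fun i => ⟨g i.1, hg i.1 i.2⟩)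
  no_loop := by
    rintro (e | e) h
    · have h0 : (0 : ℕ) = 1 := congrArg Fin.val h
      omega
    · exact hfg e.1 e.2 (congrArg Fin.val h)

/-- `P̃_{n+2,m}`: the path on `n+2` vertices `0,1,…,n+1` whose first edge is replaced by a
bundle of `m` parallel edges between `0` and `1`. -/
def tildeP (n m : ℕ) : Multigraph :=
  mkGraph (n + 2) m n (by omega) (fun i => i + 1) (fun i => i + 2)
    (fun i hi => by (try dsimp only); omega) (fun i hi => by (try dsimp only); omega) (fun i hi => by (try dsimp only); omega)

/-- `P̃′_{n+3,m}`: `P̃_{n+3,m}` with an extra simple edge `u₁u₃` (i.e. between `0` and `2`). -/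
def tildeP' (n m : ℕ) : Multigraph :=
  mkGraph (n + 3) m (n + 2) (by omega)
    (fun i => if i ≤ n then i + 1 else 0)
    (fun i => if i ≤ n then i + 2 else 2)
    (fun i hi => by (try dsimp only); split_ifs <;> omega)
    (fun i hi => by (try dsimp only); split_ifs <;> omega)
    (fun i hi => by (try dsimp only); split_ifs <;> omega)

/-- `S̃_{2j+5,m}`: the bundle `0,1`, the path `1,2,…,2j+3`, and a pendant vertex `2j+4`
attached to `2j+2`. -/
def tildeS (j m : ℕ) : Multigraph :=
  mkGraph (2*j + 5) m (2*j + 3) (by omega)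
    (fun i => if i < 2*j + 2 then i + 1 else 2*j + 2)
    (fun i => if i < 2*j + 2 then i + 2 else 2*j + 4)
    (fun i hi => by (try dsimp only); split_ifs <;> omega)
    (fun i hi => by (try dsimp only); split_ifs <;> omega)
    (fun i hi => by (try dsimp only); split_ifs <;> omega)

/-- `T̃_{2j+5,m}`: `S̃_{2j+5,m}` with the extra edge between `2j+3` and `2j+4`. -/
def tildeT (j m : ℕ) : Multigraph :=
  mkGraph (2*j + 5) m (2*j + 4) (by omega)
    (fun i => if i < 2*j + 2 then i + 1 else if i = 2*j + 2 then 2*j + 2 else 2*j + 3)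
    (fun i => if i < 2*j + 2 then i + 2 else 2*j + 4)
    (fun i hi => by (try dsimp only); split_ifs <;> omega)
    (fun i hi => by (try dsimp only); split_ifs <;> omega)
    (fun i hi => by (try dsimp only); split_ifs <;> omega)

/-- `S̃′_{2j+5,m}`: `S̃_{2j+5,m}` with an extra simple edge between `0` and `2`. -/
def tildeS' (j m : ℕ) : Multigraph :=
  mkGraph (2*j + 5) m (2*j + 4) (by omega)
    (fun i => if i < 2*j + 2 then i + 1 else if i = 2*j + 2 then 2*j + 2 else 0)
    (fun i => if i < 2*j + 2 then i + 2 else if i = 2*j + 2 then 2*j + 4 else 2)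
    (fun i hi => by (try dsimp only); split_ifs <;> omega)
    (fun i hi => by (try dsimp only); split_ifs <;> omega)
    (fun i hi => by (try dsimp only); split_ifs <;> omega)

/-- `T̃′_{2j+5,m}`: `T̃_{2j+5,m}` with an extra simple edge between `0` and `2`. -/
def tildeT' (j m : ℕ) : Multigraph :=
  mkGraph (2*j + 5) m (2*j + 5) (by omega)
    (fun i => if i < 2*j + 2 then i + 1 else if i = 2*j + 2 then 2*j + 2 else
      if i = 2*j + 3 then 2*j + 3 else 0)
    (fun i => if i < 2*j + 2 then i + 2 else if i ≤ 2*j + 3 then 2*j + 4 else 2)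
    (fun i hi => by (try dsimp only); split_ifs <;> omega)
    (fun i hi => by (try dsimp only); split_ifs <;> omega)
    (fun i hi => by (try dsimp only); split_ifs <;> omega)

/-- `G` is isomorphic to one of the unprimed graphs `P̃`, `S̃`, `T̃` of the list `L`. -/
def InL0 (G : Multigraph) : Prop :=
  ∃ m, 2 ≤ m ∧
    ((∃ n, Nonempty (G.Iso (tildeP n m))) ∨ (∃ j, Nonempty (G.Iso (tildeS j m))) ∨
      (∃ j, Nonempty (G.Iso (tildeT j m))))

/-- `G` is isomorphic to one of the primed graphs `P̃′`, `S̃′`, `T̃′` of the list `L`. -/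
def InL1 (G : Multigraph) : Prop :=
  ∃ m, 2 ≤ m ∧
    ((∃ n, Nonempty (G.Iso (tildeP' n m))) ∨ (∃ j, Nonempty (G.Iso (tildeS' j m))) ∨
      (∃ j, Nonempty (G.Iso (tildeT' j m))))

/-- `G` is isomorphic to one of the graphs of the list `L`. -/
def InListL (G : Multigraph) : Prop := InL0 G ∨ InL1 G
section CL

variable (P : Type*) [PartialOrder P]

/-- `c` is a saturated chain from `x` to `y`: consecutive elements are covers. -/
def SatChain (x y : P) (c : List P) : Prop :=
  c.Chain' (· ⋖ ·) ∧ c.head? = some x ∧ c.getLast? = some y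

variable [BoundedOrder P]

/-- A maximal chain of the bounded poset `P`. -/
def MaxChain : Type _ := {c : List P // SatChain P ⊥ ⊤ c}

variable {P}

/-- The maximal chain `σ` extends the root `r` (a saturated chain from `⊥` to some `x`)
followed by the saturated chain `c` (from `x` to some `y`). -/
def ChainExtends (σ : MaxChain P) (r c : List P) : Prop := (r ++ c.tail) <+: σ.1

/-- A chain-edge labeling: two maximal chains that coincide along their bottom `d` covers
receive the same labels on those covers. `lab σ i` is the label of the `i`-th cover
of the maximal chain `σ`. -/
def IsChainEdgeLabeling {L : Type} [PartialOrder L] (lab : MaxChain P → ℕ → L) : Prop :=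
  ∀ σ τ : MaxChain P, ∀ d : ℕ, σ.1.take (d + 1) = τ.1.take (d + 1) →
    ∀ i, i < d → lab σ i = lab τ i

/-- The chain `c` of the interval rooted at `r` is strictly increasing with respect
to the labeling `lab`. -/
def SegIncreasing {L : Type} [PartialOrder L] (lab : MaxChain P → ℕ → L)
    (r c : List P) : Prop :=
  ∃ σ : MaxChain P, ChainExtends σ r c ∧
    ∀ i, r.length ≤ i + 1 → i + 4 ≤ r.length + c.length → lab σ i < lab σ (i + 1)

/-- The sequence of labels of the covers of the chain `c` in the interval rooted at `r`,
read off along the extending maximal chain `σ`. -/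
def SegLabels {L : Type} (lab : MaxChain P → ℕ → L) (σ : MaxChain P)
    (r c : List P) : List L :=
  (List.range (c.length - 1)).map fun i => lab σ (r.length - 1 + i)

/-- A CL-labeling: a chain-edge labeling such that in every rooted interval there is a
unique strictly increasing maximal chain, and it lexicographically precedes all other
maximal chains of the rooted interval. -/
def IsCLLabeling {L : Type} [PartialOrder L] (lab : MaxChain P → ℕ → L) : Prop :=
  IsChainEdgeLabeling lab ∧
  ∀ x y : P, x ≤ y → ∀ r : List P, SatChain P ⊥ x r →
    ∃ c : List P, SatChain P x y c ∧ SegIncreasing lab r c ∧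
      ∀ c' : List P, SatChain P x y c' → c' ≠ c →
        ¬ SegIncreasing lab r c' ∧
        ∀ σ σ' : MaxChain P, ChainExtends σ r c → ChainExtends σ' r c' →
          List.Lex (· < ·) (SegLabels lab σ r c) (SegLabels lab σ' r c')

/-- A bounded poset is CL-shellable if it admits a CL-labeling. -/
def CLShellable (P : Type*) [PartialOrder P] [BoundedOrder P] : Prop :=
  ∃ (L : Type) (_ : LinearOrder L) (lab : MaxChain P → ℕ → L), IsCLLabeling lab

end CL

/-- `IntervalRAO x y l`: the list `l` is a recursive atom ordering of the interval `[x,y]`. -/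
inductive IntervalRAO {P : Type*} [PartialOrder P] : P → P → List P → Prop where
  | base : ∀ {x y : P}, x ⋖ y → IntervalRAO x y [y]
  | step : ∀ {x y : P} (l : List P) (ls : ℕ → List P), x < y → ¬ x ⋖ y → l.Nodup →
      (∀ z, z ∈ l ↔ (x ⋖ z ∧ z ≤ y)) →
      (∀ j, ∀ hj : j < l.length, IntervalRAO (l.get ⟨j, hj⟩) y (ls j)) →
      (∀ j, j < l.length →
        ∃ d, ∀ k, ∀ hk : k < (ls j).length,
          (k < d ↔ ∃ i, ∃ hi : i < l.length, i < j ∧ l.get ⟨i, hi⟩ ≤ (ls j).get ⟨k, hk⟩)) →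
      (∀ i j, ∀ hi : i < l.length, ∀ hj : j < l.length, i < j →
        ∀ w, l.get ⟨i, hi⟩ ≤ w → l.get ⟨j, hj⟩ ≤ w → w ≤ y →
          ∃ k, k < j ∧ ∃ hk : k < l.length, ∃ z, l.get ⟨j, hj⟩ ⋖ z ∧ z ≤ w ∧
            l.get ⟨k, hk⟩ < z) →
      IntervalRAO x y l

/-- A bounded poset admits a recursive atom ordering. -/
def HasRAO (P : Type*) [PartialOrder P] [BoundedOrder P] : Prop :=
  ∃ l : List P, IntervalRAO (⊥ : P) ⊤ l
/-- The standard labeling convention for a graph `G` of the list `L` together with an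
admissible collection `A`: the vertices are `v 1, …, v n` with the bundle between
`v 1` and `v 2`, the elements of `B ∩ A` are `ea 1, …, ea twoM`, the elements of
`B ∖ A` are `eb 1, …, eb ell`, each vertex `v i` (`i ≥ 3`) is closest to `v (i-1)`,
`v 1 ∉ A` when `n` is odd, and `v 1` is adjacent to `v 3` when `n` is even. -/
structure StdLabeling (G : Multigraph) (A : Set G.El) where
  n : ℕ
  twoM : ℕ
  ell : ℕ
  hn : 2 ≤ n
  v : ℕ → G.V
  ea : ℕ → G.E
  eb : ℕ → G.E
  vbij : Set.BijOn v (Set.Icc 1 n) Set.univ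
  eabij : Set.BijOn ea (Set.Icc 1 twoM) {e | G.Multiple e ∧ Sum.inr e ∈ A}
  ebbij : Set.BijOn eb (Set.Icc 1 ell) {e | G.Multiple e ∧ Sum.inr e ∉ A}
  bundleEnds : ∀ e, G.Multiple e ↔
    ((G.fst e = v 1 ∧ G.snd e = v 2) ∨ (G.fst e = v 2 ∧ G.snd e = v 1))
  closest : ∀ i, 3 ≤ i → i ≤ n → ∀ j, i ≤ j → j ≤ n →
    G.dist (v (i - 1)) (v i) ≤ G.dist (v (i - 1)) (v j)
  oddA : Odd n → Sum.inl (v 1) ∉ A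
  evenAdj : Even n → 3 ≤ n → G.adj (v 1) (v 3)

namespace StdLabeling

variable {G : Multigraph} {A : Set G.El} (L : StdLabeling G A)

/-- The label of a vertex. -/
noncomputable def vIdx (w : G.V) : ℕ := sInf {i | 1 ≤ i ∧ i ≤ L.n ∧ L.v i = w}

/-- The index of an edge of `B ∩ A`. -/
noncomputable def aIdx (e : G.E) : ℕ := sInf {i | 1 ≤ i ∧ i ≤ L.twoM ∧ L.ea i = e}

/-- The index of an edge of `B ∖ A`. -/
noncomputable def bIdx (e : G.E) : ℕ := sInf {i | 1 ≤ i ∧ i ≤ L.ell ∧ L.eb i = e}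

/-- The rank of a ground element in the total order `≺_I` on `V ∪ B`. -/
noncomputable def rank (I : Set G.El) : G.El → ℕ :=
  if ∀ e : G.E, Sum.inr e ∉ I then
    Sum.elim (fun w => L.vIdx w)
      (fun e => if Sum.inr e ∈ A then L.n + L.aIdx e else L.n + L.twoM + L.bIdx e)
  else if ∀ e : G.E, Sum.inr e ∈ I → Sum.inr e ∈ A then
    Sum.elim
      (fun w => if L.vIdx w ≤ 2 then L.vIdx w
        else sSup {i | 1 ≤ i ∧ i ≤ L.twoM ∧ Sum.inr (L.ea i) ∈ I} + L.vIdx w)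
      (fun e => if Sum.inr e ∈ A then
          (if L.aIdx e ≤ sSup {i | 1 ≤ i ∧ i ≤ L.twoM ∧ Sum.inr (L.ea i) ∈ I}
            then 2 + L.aIdx e else L.n + L.aIdx e)
        else L.n + L.twoM + L.bIdx e)
  else
    Sum.elim
      (fun w => if L.vIdx w ≤ 2 then L.vIdx w
        else L.twoM + sSup {i | 1 ≤ i ∧ i ≤ L.ell ∧ Sum.inr (L.eb i) ∈ I} + L.vIdx w)
      (fun e => if Sum.inr e ∈ A then 2 + L.aIdx e
        else (if L.bIdx e ≤ sSup {i | 1 ≤ i ∧ i ≤ L.ell ∧ Sum.inr (L.eb i) ∈ I}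
          then 2 + L.twoM + L.bIdx e else L.n + L.twoM + L.bIdx e))

end StdLabeling

/-- The set `S` lexicographically precedes the set `T`, comparing the sorted sequences of
ranks of their elements. -/
noncomputable def setLex {G : Multigraph} (f : G.El → ℕ) (S T : Set G.El) : Prop :=
  List.Lex (· < ·)
    (Finset.sort (Finset.image f (Set.toFinite S).toFinset) (· ≤ ·))
    (Finset.sort (Finset.image f (Set.toFinite T).toFinset) (· ≤ ·))

namespace StdLabeling

variable {G : Multigraph} {A : Set G.El} (L : StdLabeling G A)

/-- The pair of endpoints of the bundle, as ground-set elements. -/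
def v12set : Set G.El := {Sum.inl (L.v 1), Sum.inl (L.v 2)}

/-- The atom ordering `J ≺_atom^I J'` of the atoms of the interval `[I, G]`. -/
noncomputable def atomPrec (I J J' : EvenPoset G A) : Prop :=
  (((J.1 \ I.1) ∩ L.v12set).ncard = 1 ∧ ((J'.1 \ I.1) ∩ L.v12set).ncard = 2) ∨
    setLex (L.rank I.1) (J.1 \ I.1) (J'.1 \ I.1)

/-- `c` is a falling maximal chain of the poset of `A`-even subgraphs, with respect to the
integer CL-labeling obtained from the recursive atom orderings `≺_atom` by the standard
Björner–Wachs construction: a maximal chain is falling iff each element `x_{t+1}` of the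
chain lies above an atom of `[x_{t-1}, ⊤]` that precedes `x_t` in `≺_atom^{x_{t-1}}`. -/
noncomputable def Falling (c : List (EvenPoset G A)) : Prop :=
  SatChain (EvenPoset G A) ⊥ ⊤ c ∧
  ∀ t, ∀ _ : 1 ≤ t, ∀ h2 : t + 1 < c.length,
    ∃ z : EvenPoset G A,
      c.get ⟨t - 1, by omega⟩ ⋖ z ∧
      L.atomPrec (c.get ⟨t - 1, by omega⟩) z (c.get ⟨t, by omega⟩) ∧
      z ≤ c.get ⟨t + 1, h2⟩

end StdLabeling
/-- `e` is an element of `B ∩ A` (a multiple edge belonging to `A`). -/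
def Multigraph.inBA (G : Multigraph) (A : Set G.El) (e : G.E) : Prop :=
  G.Multiple e ∧ Sum.inr e ∈ A

/-- `e` is an element of `B ∖ A` (a multiple edge not belonging to `A`). -/
def Multigraph.inBnA (G : Multigraph) (A : Set G.El) (e : G.E) : Prop :=
  G.Multiple e ∧ Sum.inr e ∉ A

/-- `i` is the index of the smallest-labelled vertex outside `I ∪ {v 1, v 2}`,
i.e. `v i = min (V ∖ (I ∪ {1,2}))`. -/
def StdLabeling.vminP {G : Multigraph} {A : Set G.El} (L : StdLabeling G A)
    (I : Set G.El) (i : ℕ) : Prop :=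
  3 ≤ i ∧ i ≤ L.n ∧ Sum.inl (L.v i) ∉ I ∧ ∀ j, 3 ≤ j → j < i → Sum.inl (L.v j) ∈ I

/-- The underlying set of the poset `P₀`. -/
def P0 : Type := Fin 12

instance : Fintype P0 := inferInstanceAs (Fintype (Fin 12))
instance : DecidableEq P0 := inferInstanceAs (DecidableEq (Fin 12))

/-- The elements of `P₀`, numbered
`0 = 0̂, 1 = a, 2 = b, 3 = a′, 4 = b′, 5 = c, 6 = d, 7 = c′, 8 = d′, 9 = e, 10 = e′, 11 = 1̂`. -/
def P0.el (i : Fin 12) : P0 := i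

/-- The order relation of `P₀`, encoding exactly the cover relations
`0̂⋖a,b,a′,b′,e,e′`, `a,b⋖c,d`, `a′,b′⋖c′,d′`, `c,d,c′,d′,e,e′⋖1̂`. -/
def p0le (x y : Fin 12) : Prop :=
  x = y ∨ x = 0 ∨ y = 11 ∨ ((x = 1 ∨ x = 2) ∧ (y = 5 ∨ y = 6)) ∨
    ((x = 3 ∨ x = 4) ∧ (y = 7 ∨ y = 8))

instance (x y : Fin 12) : Decidable (p0le x y) := by unfold p0le; infer_instance

lemma p0le_trans : ∀ a b c : Fin 12, p0le a b → p0le b c → p0le a c := by decide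

lemma p0le_antisymm : ∀ a b : Fin 12, p0le a b → p0le b a → a = b := by decide

instance : PartialOrder P0 where
  le x y := p0le x y
  le_refl x := Or.inl rfl
  le_trans a b c := p0le_trans a b c
  le_antisymm a b := p0le_antisymm a b

/- In a shelling every facet contains `0̂` and `1̂`, so `{0̂, 1̂}` lies in the intersection of any
facet with the first one. For the first facet meeting the wing `{a, b, c, d}`, all its other
vertices lie in that wing and there are two of them, so every codimension-one face through
`{0̂, 1̂}` meets the wing and cannot lie in an earlier facet: that facet must be the first one.
The same holds for the wing `{a′, b′, c′, d′}`, but no chain meets both wings. -/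

section Shelling

variable {α : Type*}

theorem IsShelling.mem_iff_isFacet {K : Set (Finset α)} {l : List (Finset α)}
    (hl : IsShelling K l) {F : Finset α} : F ∈ l ↔ IsFacet K F :=
  hl.2.1 F

theorem IsShelling.eq_zero_of_forall_lt_notMem [DecidableEq α] {K : Set (Finset α)}
    {l : List (Finset α)} (hl : IsShelling K l) {S : Finset α} {W : Set α} (hS : ∀ F ∈ l, S ⊆ F)
    {k : ℕ} (hk : k < l.length) (hW : ∀ z ∈ l.get ⟨k, hk⟩, z ∉ S → z ∈ W)
    (hcard : 1 < (l.get ⟨k, hk⟩ \ S).card)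
    (hmin : ∀ i (hi : i < l.length), i < k → ∀ z ∈ l.get ⟨i, hi⟩, z ∉ W) : k = 0 := by
  by_contra hk0
  obtain ⟨T, hTk, hTcard, -, i, hi, hik, hTi⟩ := hl.2.2 k hk (by omega) S
    (hS _ (l.get_mem _)) ⟨0, by omega, by omega, hS _ (l.get_mem _)⟩
  obtain ⟨z, hzT, hzS⟩ : ∃ z ∈ T, z ∉ S := by
    by_contra! hTS
    have := Finset.card_le_card (Finset.sdiff_subset_sdiff (le_refl (l.get ⟨k, hk⟩)) hTS)
    rw [Finset.card_sdiff_of_subset hTk] at this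
    omega
  exact hmin i hi hik z (hTi hzT) (hW z (hTk hzT) hzS)

theorem IsFacet.mem_of_forall_comparable [Preorder α] {F : Finset α}
    (hF : IsFacet (orderComplex α) F) {w : α} (hw : ∀ u ∈ F, w ≤ u ∨ u ≤ w) : w ∈ F := by
  have hchain : IsChainFinset (insert w F) := by
    intro x hx y hy
    rw [Finset.mem_insert] at hx hy
    rcases hx with rfl | hx <;> rcases hy with rfl | hy
    · exact Or.inl le_rfl
    · exact hw y hy
    · exact (hw x hx).symm
    · exact hF.1 x hx y hy
  rw [hF.2 _ hchain (Finset.subset_insert w F)]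
  exact Finset.mem_insert_self w F

theorem IsFacet.mk_bot_mem [Preorder α] [OrderBot α] {Q : Set α} (hbot : ⊥ ∈ Q) {F : Finset Q}
    (hF : IsFacet (orderComplex Q) F) : ⟨⊥, hbot⟩ ∈ F :=
  hF.mem_of_forall_comparable fun _ _ => Or.inl bot_le

theorem IsFacet.mk_top_mem [Preorder α] [OrderTop α] {Q : Set α} (htop : ⊤ ∈ Q) {F : Finset Q}
    (hF : IsFacet (orderComplex Q) F) : ⟨⊤, htop⟩ ∈ F :=
  hF.mem_of_forall_comparable fun _ _ => Or.inr le_top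

end Shelling

namespace P0

instance : DecidableRel (α := P0) (· ≤ ·) := fun x y => instDecidableP0le x y

instance : BoundedOrder P0 where
  top := el 11
  le_top _ := Or.inr (Or.inr (Or.inl rfl))
  bot := el 0
  bot_le _ := Or.inr (Or.inl rfl)

def rank : P0 → Fin 4 := ![0, 1, 1, 1, 1, 2, 2, 2, 2, 1, 1, 3]

/-- `false` indexes the wing `{a, b, c, d}` and `true` the wing `{a′, b′, c′, d′}`. -/
def lowerWing : Bool → Finset P0
  | false => {el 1, el 2}
  | true => {el 3, el 4}

def upperWing : Bool → Finset P0
  | false => {el 5, el 6}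
  | true => {el 7, el 8}

def wing (primed : Bool) : Finset P0 := lowerWing primed ∪ upperWing primed

theorem eq_of_comparable_of_rank_eq :
    ∀ u v : P0, u ≤ v ∨ v ≤ u → rank u = rank v → u = v := by decide

theorem eq_bot_of_rank_eq_zero : ∀ u : P0, rank u = 0 → u = ⊥ := by decide

theorem eq_top_of_rank_eq_three : ∀ u : P0, rank u = 3 → u = ⊤ := by decide

theorem mem_upperWing_of_rank_eq_two : ∀ (b : Bool) (u v : P0), u ∈ lowerWing b →
    u ≤ v ∨ v ≤ u → rank v = 2 → v ∈ upperWing b := by decide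

theorem lowerWing_le_upperWing : ∀ (b : Bool) (u v : P0), u ∈ lowerWing b →
    v ∈ upperWing b → u ≤ v := by decide

theorem mem_wing_of_comparable : ∀ (b : Bool) (u v : P0), u ∈ wing b →
    u ≤ v ∨ v ≤ u → v ∈ wing b ∨ v = ⊥ ∨ v = ⊤ := by decide

theorem bot_notMem_wing : ∀ b : Bool, ⊥ ∉ wing b := by decide

theorem top_notMem_wing : ∀ b : Bool, ⊤ ∉ wing b := by decide

theorem notMem_upperWing_of_mem_lowerWing :
    ∀ (b : Bool) (u : P0), u ∈ lowerWing b → u ∉ upperWing b := by decide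

theorem not_comparable_of_mem_wing :
    ∀ u v : P0, u ∈ wing false → v ∈ wing true → ¬ (u ≤ v ∨ v ≤ u) := by decide

theorem rank_injOn_of_isChainFinset {C : Finset P0} (hC : IsChainFinset C) :
    Set.InjOn rank C :=
  fun u hu v hv => eq_of_comparable_of_rank_eq u v (hC u hu v hv)

theorem card_le_four_of_isChainFinset {C : Finset P0} (hC : IsChainFinset C) : C.card ≤ 4 := by
  simpa using Finset.card_le_card_of_injOn rank (fun _ _ => Finset.mem_univ _)
    (rank_injOn_of_isChainFinset hC)

theorem exists_rank_eq_of_card_eq_four {C : Finset P0} (hC : IsChainFinset C)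
    (hcard : C.card = 4) (r : Fin 4) : ∃ u ∈ C, rank u = r := by
  have himage : C.image rank = Finset.univ := by
    apply Finset.eq_univ_of_card
    rw [Finset.card_image_of_injOn (rank_injOn_of_isChainFinset hC), hcard, Fintype.card_fin]
  exact Finset.mem_image.1 (by rw [himage]; exact Finset.mem_univ r)

theorem bot_mem_of_card_eq_four {C : Finset P0} (hC : IsChainFinset C) (hcard : C.card = 4) :
    ⊥ ∈ C := by
  obtain ⟨u, hu, hr⟩ := exists_rank_eq_of_card_eq_four hC hcard 0
  rwa [← eq_bot_of_rank_eq_zero u hr]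

theorem top_mem_of_card_eq_four {C : Finset P0} (hC : IsChainFinset C) (hcard : C.card = 4) :
    ⊤ ∈ C := by
  obtain ⟨u, hu, hr⟩ := exists_rank_eq_of_card_eq_four hC hcard 3
  rwa [← eq_top_of_rank_eq_three u hr]

theorem exists_mem_upperWing_of_card_eq_four {C : Finset P0} (hC : IsChainFinset C)
    (hcard : C.card = 4) {b : Bool} {x : P0} (hxC : x ∈ C) (hx : x ∈ lowerWing b) :
    ∃ y ∈ C, y ∈ upperWing b := by
  obtain ⟨y, hyC, hr⟩ := exists_rank_eq_of_card_eq_four hC hcard 2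
  exact ⟨y, hyC, mem_upperWing_of_rank_eq_two b x y hx (hC x hxC y hyC) hr⟩

section Subposet

variable {Q : Set P0}

theorem isFacet_subtype_of_card_eq_four {C : Finset P0} (hCQ : ↑C ⊆ Q)
    (hC : IsChainFinset C) (hcard : C.card = 4) :
    IsFacet (orderComplex Q) (C.subtype (· ∈ Q)) := by
  refine ⟨fun x hx y hy => hC x (Finset.mem_subtype.1 hx) y (Finset.mem_subtype.1 hy), ?_⟩
  intro F hF hCF
  have hFval : IsChainFinset (F.map (Function.Embedding.subtype (· ∈ Q))) := by
    simp only [IsChainFinset, Finset.mem_map, Function.Embedding.coe_subtype]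
    rintro _ ⟨x, hx, rfl⟩ _ ⟨y, hy, rfl⟩
    exact hF x hx y hy
  refine Finset.eq_of_subset_of_card_le hCF ?_
  rw [Finset.card_subtype, Finset.filter_true_of_mem fun x hx => hCQ hx, hcard]
  simpa using card_le_four_of_isChainFinset hFval

variable {F : Finset Q} {b : Bool} {z : Q}

theorem exists_mem_lowerWing_of_isFacet (hF : IsFacet (orderComplex Q) F) (hz : z ∈ F)
    (hzW : z.1 ∈ wing b) {x : P0} (hxQ : x ∈ Q) (hx : x ∈ lowerWing b) :
    ∃ u ∈ F, u.1 ∈ lowerWing b := by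
  by_contra! hF_lower
  refine hF_lower _ (hF.mem_of_forall_comparable (w := ⟨x, hxQ⟩) fun u hu => ?_) hx
  rcases mem_wing_of_comparable b z u hzW (hF.1 z hz u hu) with hu' | hu' | hu'
  · rcases Finset.mem_union.1 hu' with hl | hu'
    · exact absurd hl (hF_lower u hu)
    · exact Or.inl (lowerWing_le_upperWing b x u hx hu')
  · exact Or.inr (by rw [← Subtype.coe_le_coe, hu']; exact bot_le)
  · exact Or.inl (by rw [← Subtype.coe_le_coe, hu']; exact le_top)

theorem exists_mem_upperWing_of_isFacet (hF : IsFacet (orderComplex Q) F) (hz : z ∈ F)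
    (hzW : z.1 ∈ wing b) {y : P0} (hyQ : y ∈ Q) (hy : y ∈ upperWing b) :
    ∃ u ∈ F, u.1 ∈ upperWing b := by
  by_contra! hF_upper
  refine hF_upper _ (hF.mem_of_forall_comparable (w := ⟨y, hyQ⟩) fun u hu => ?_) hy
  rcases mem_wing_of_comparable b z u hzW (hF.1 z hz u hu) with hu' | hu' | hu'
  · rcases Finset.mem_union.1 hu' with hl | hu'
    · exact Or.inr (lowerWing_le_upperWing b u y hl hy)
    · exact absurd hu' (hF_upper u hu)
  · exact Or.inr (by rw [← Subtype.coe_le_coe, hu']; exact bot_le)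
  · exact Or.inl (by rw [← Subtype.coe_le_coe, hu']; exact le_top)

end Subposet

end P0

section Subposet

open P0

variable {Q : Set P0} {b : Bool}

theorem IsShelling.exists_mem_head_wing {l : List (Finset Q)}
    (hl : IsShelling (orderComplex Q) l) (hbot : ⊥ ∈ Q) (htop : ⊤ ∈ Q) {x y : P0}
    (hxQ : x ∈ Q) (hx : x ∈ lowerWing b) (hyQ : y ∈ Q) (hy : y ∈ upperWing b)
    (hmeet : ∃ k, ∃ hk : k < l.length, ∃ z ∈ l.get ⟨k, hk⟩, z.1 ∈ wing b) :
    ∃ h0 : 0 < l.length, ∃ z ∈ l.get ⟨0, h0⟩, z.1 ∈ wing b := by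
  obtain ⟨k, ⟨hk, z, hz, hzW⟩, hmin⟩ : ∃ k, (∃ hk : k < l.length, ∃ z ∈ l.get ⟨k, hk⟩,
      z.1 ∈ wing b) ∧ ∀ i < k, ¬ ∃ hi : i < l.length, ∃ z ∈ l.get ⟨i, hi⟩, z.1 ∈ wing b :=
    ⟨_, Nat.find_spec hmeet, fun _ => Nat.find_min hmeet⟩
  have hF : IsFacet (orderComplex Q) (l.get ⟨k, hk⟩) := hl.mem_iff_isFacet.1 (l.get_mem _)
  set S : Finset Q := {⟨⊥, hbot⟩, ⟨⊤, htop⟩}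
  have hS : ∀ F ∈ l, S ⊆ F := fun F hFl => by
    have hFfacet := hl.mem_iff_isFacet.1 hFl
    simp only [S, Finset.insert_subset_iff, Finset.singleton_subset_iff]
    exact ⟨hFfacet.mk_bot_mem hbot, hFfacet.mk_top_mem htop⟩
  have hW : ∀ u ∈ l.get ⟨k, hk⟩, u ∉ S → u.1 ∈ wing b := by
    intro u hu huS
    rcases mem_wing_of_comparable b z u hzW (hF.1 z hz u hu) with hu' | hu' | hu'
    · exact hu'
    · exact absurd (Finset.mem_insert.2 (Or.inl (Subtype.ext hu'))) huS
    · exact absurd (Finset.mem_insert_of_mem (Finset.mem_singleton.2 (Subtype.ext hu'))) huS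
  have hnotMem_S : ∀ u : Q, u.1 ∈ wing b → u ∉ S := by
    intro u hu huS
    simp only [S, Finset.mem_insert, Finset.mem_singleton] at huS
    rcases huS with rfl | rfl
    exacts [bot_notMem_wing b hu, top_notMem_wing b hu]
  have hcard : 1 < (l.get ⟨k, hk⟩ \ S).card := by
    obtain ⟨u, hu, hul⟩ := exists_mem_lowerWing_of_isFacet hF hz hzW hxQ hx
    obtain ⟨v, hv, hvu⟩ := exists_mem_upperWing_of_isFacet hF hz hzW hyQ hy
    refine Finset.one_lt_card.2 ⟨u, ?_, v, ?_, fun huv => ?_⟩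
    · exact Finset.mem_sdiff.2 ⟨hu, hnotMem_S u (Finset.mem_union_left _ hul)⟩
    · exact Finset.mem_sdiff.2 ⟨hv, hnotMem_S v (Finset.mem_union_right _ hvu)⟩
    · exact notMem_upperWing_of_mem_lowerWing b u hul (huv ▸ hvu)
  obtain rfl := hl.eq_zero_of_forall_lt_notMem (W := {u | u.1 ∈ wing b}) hS hk hW hcard
    fun i hi hik u hu huW => hmin i hik ⟨hi, u, hu, huW⟩
  exact ⟨hk, z, hz, hzW⟩

theorem IsShelling.exists_mem_head_wing_of_chain {l : List (Finset Q)}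
    (hl : IsShelling (orderComplex Q) l) {C : Finset P0} (hCQ : ↑C ⊆ Q)
    (hC : IsChainFinset C) (hcard : C.card = 4) {x : P0} (hxC : x ∈ C) (hx : x ∈ lowerWing b) :
    ∃ h0 : 0 < l.length, ∃ z ∈ l.get ⟨0, h0⟩, z.1 ∈ wing b := by
  obtain ⟨y, hyC, hy⟩ := exists_mem_upperWing_of_card_eq_four hC hcard hxC hx
  have hCl := hl.mem_iff_isFacet.2 (isFacet_subtype_of_card_eq_four hCQ hC hcard)
  obtain ⟨⟨k, hk⟩, hget⟩ := List.get_of_mem hCl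
  refine hl.exists_mem_head_wing (hCQ (bot_mem_of_card_eq_four hC hcard))
    (hCQ (top_mem_of_card_eq_four hC hcard)) (hCQ hxC) hx (hCQ hyC) hy
    ⟨k, hk, ⟨x, hCQ hxC⟩, ?_, Finset.mem_union_left _ hx⟩
  rw [hget]
  exact Finset.mem_subtype.2 hxC

end Subposet

theorem subposet_of_P0_not_shellable_general (Q : Set P0)
    (C₁ C₂ : Finset P0)
    (hC₁Q : ↑C₁ ⊆ Q) (hC₂Q : ↑C₂ ⊆ Q)
    (hC₁chain : IsChainFinset C₁) (hC₂chain : IsChainFinset C₂)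
    (hC₁card : C₁.card = 4) (hC₂card : C₂.card = 4)
    (hab : P0.el 1 ∈ C₁ ∨ P0.el 2 ∈ C₁)
    (hab' : P0.el 3 ∈ C₂ ∨ P0.el 4 ∈ C₂) :
    ¬ PosetShellable {x : P0 // x ∈ Q} := by
  rintro ⟨l, hl⟩
  obtain ⟨x₁, hx₁C, hx₁⟩ : ∃ x ∈ C₁, x ∈ P0.lowerWing false := by
    rcases hab with h | h
    exacts [⟨_, h, by decide⟩, ⟨_, h, by decide⟩]
  obtain ⟨x₂, hx₂C, hx₂⟩ : ∃ x ∈ C₂, x ∈ P0.lowerWing true := by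
    rcases hab' with h | h
    exacts [⟨_, h, by decide⟩, ⟨_, h, by decide⟩]
  obtain ⟨h0, z₁, hz₁, hz₁W⟩ := hl.exists_mem_head_wing_of_chain hC₁Q hC₁chain hC₁card hx₁C hx₁
  obtain ⟨h0', z₂, hz₂, hz₂W⟩ := hl.exists_mem_head_wing_of_chain hC₂Q hC₂chain hC₂card hx₂C hx₂
  have hhead : IsChainFinset (l.get ⟨0, h0⟩) := (hl.mem_iff_isFacet.1 (l.get_mem _)).1
  exact P0.not_comparable_of_mem_wing z₁ z₂ hz₁W hz₂W (hhead z₁ hz₁ z₂ hz₂)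

/-- Any subposet of `P₀` containing two chains of length `3`, one through `a` or `b` and
another through `a′` or `b′`, is not shellable. -/
theorem subposet_of_P0_not_shellable (Q : Set P0)
    (C₁ C₂ : Finset P0)
    (hC₁Q : ↑C₁ ⊆ Q) (hC₂Q : ↑C₂ ⊆ Q)
    (hC₁chain : IsChainFinset C₁) (hC₂chain : IsChainFinset C₂)
    (hC₁card : C₁.card = 4) (hC₂card : C₂.card = 4)
    (hne : C₁ ≠ C₂)
    (hab : P0.el 1 ∈ C₁ ∨ P0.el 2 ∈ C₁)
    (hab' : P0.el 3 ∈ C₂ ∨ P0.el 4 ∈ C₂) :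
    ¬ PosetShellable {x : P0 // x ∈ Q} :=
  subposet_of_P0_not_shellable_general Q C₁ C₂ hC₁Q hC₂Q hC₁chain hC₂chain hC₁card hC₂card hab hab'
end

section
/- Let G be a connected non-simple graph in G* with at least 3 vertices, let its (unique) bundle B have endpoints labeled 1 and 2, and for each vertex i set N*(i) = N_G(i) ∖ {1,2}, where N_G(i) is the set of vertices adjacent to i in G. Then |N*(1) ∪ N*(2)| = 1. -/
open Classical

set_option maxHeartbeats 1000000

/-!
Suppose `w₁ ≠ w₂` both lie in `N*(1) ∪ N*(2)`. In the PI-graph `H` induced on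
`{1, 2, w₁, w₂}` take the admissible collection `A` made of the four vertices and two edges
`f₀, f₁` of the bundle. Then `A` is itself `A`-even, and every `A`-even subgraph strictly
between `∅` and `A` has even size (its components do), so a size count shows that none of
them containing `w₂` lies above one avoiding it. Thus the open interval `(∅, A)` splits into
two mutually incomparable parts, each containing a chain `{x, wᵢ} ⊂ {1, 2, wᵢ, f₀}` with `x` a
neighbour of `wᵢ` in `{1, 2}`. The link of a maximal chain through `∅` and `A` avoiding
`(∅, A)` is the order complex of that interval, which is then disconnected with two components
of positive dimension; this is impossible in a shellable complex. Hence
`|N*(1) ∪ N*(2)| ≤ 1`, and connectivity together with a third vertex gives `≥ 1`.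
-/

section Shellability

variable {α : Type*}

def FacetExtendsOnSide (l : List (Finset α)) (c : Finset α) (q : α → Prop) (k : ℕ) : Prop :=
  ∃ hk : k < l.length, c ⊆ l[k] ∧ 2 ≤ (l[k] \ c).card ∧ ∀ z ∈ l[k] \ c, q z

variable {K : Set (Finset α)} {l : List (Finset α)} {c : Finset α} {q : α → Prop}

theorem IsShelling.exists_lt_facetExtendsOnSide (hl : IsShelling K l)
    (hq : ∀ F, IsFacet K F → c ⊆ F → ∀ x ∈ F \ c, ∀ z ∈ F \ c, q x → q z)
    {k : ℕ} (hk : FacetExtendsOnSide l c q k) {i : ℕ} (hi : i < l.length) (hik : i < k)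
    (hci : c ⊆ l[i]) : ∃ j < k, FacetExtendsOnSide l c q j := by
  obtain ⟨hk, hck, htwo, hside⟩ := hk
  obtain ⟨hnd, hfac, hsh⟩ := hl
  have hfacet : ∀ m (hm : m < l.length), IsFacet K l[m] :=
    fun m hm => (hfac _).1 (List.getElem_mem hm)
  obtain ⟨T, hTk, hTcard, hcT, j, hj, hjk, hTj⟩ :=
    hsh k hk (by omega) c (by simpa using hck) ⟨i, hi, hik, by simpa using hci⟩
  simp only [List.get_eq_getElem] at hTk hTcard hTj
  -- `T ⊊ F_j`, since otherwise the facets `F_j ⊆ F_k` would coincide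
  have hTj' : T ⊂ l[j] := by
    refine ⟨hTj, fun hjT => hjk.ne ?_⟩
    exact hnd.getElem_inj_iff.1 ((hfacet j hj).2 _ (hfacet k hk).1 (hjT.trans hTk))
  have hcj : c ⊆ l[j] := hcT.trans hTj
  have hcard : (l[k] \ c).card ≤ (l[j] \ c).card := by
    rw [Finset.card_sdiff_of_subset hck, Finset.card_sdiff_of_subset hcj]
    have := Finset.card_lt_card hTj'
    omega
  obtain ⟨z, hz⟩ : (T \ c).Nonempty := by
    rw [← Finset.card_pos, Finset.card_sdiff_of_subset hcT]
    rw [Finset.card_sdiff_of_subset hck] at htwo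
    omega
  refine ⟨j, hjk, hj, hcj, htwo.trans hcard, fun x hx => ?_⟩
  exact hq _ (hfacet j hj) hcj z (Finset.sdiff_subset_sdiff hTj le_rfl hz) x hx
    (hside z (Finset.sdiff_subset_sdiff hTk le_rfl hz))

theorem IsShelling.exists_facetExtendsOnSide_first (hl : IsShelling K l)
    (hq : ∀ F, IsFacet K F → c ⊆ F → ∀ x ∈ F \ c, ∀ z ∈ F \ c, q x → q z)
    {k : ℕ} (hk : FacetExtendsOnSide l c q k) :
    ∃ k', FacetExtendsOnSide l c q k' ∧ ∀ i (hi : i < l.length), i < k' → ¬ c ⊆ l[i] := by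
  induction k using Nat.strong_induction_on with
  | _ k ih =>
    by_cases h : ∃ i, ∃ hi : i < l.length, i < k ∧ c ⊆ l[i]
    · obtain ⟨i, hi, hik, hci⟩ := h
      obtain ⟨j, hjk, hj⟩ := hl.exists_lt_facetExtendsOnSide hq hk hi hik hci
      exact ih j hjk hj
    · push Not at h
      exact ⟨k, hk, h⟩

/-- The link of a face `c` of a shellable complex cannot split into two parts of positive
dimension. -/
theorem IsShelling.side_propagates (hl : IsShelling K l)
    (hq : ∀ F, IsFacet K F → c ⊆ F → ∀ x ∈ F \ c, ∀ z ∈ F \ c, q x → q z)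
    {F F' : Finset α} (hF : IsFacet K F) (hF' : IsFacet K F') (hcF : c ⊆ F) (hcF' : c ⊆ F')
    (hF₂ : 2 ≤ (F \ c).card) (hF'₂ : 2 ≤ (F' \ c).card)
    {x x' : α} (hx : x ∈ F \ c) (hx' : x' ∈ F' \ c) (h : q x) : q x' := by
  by_contra h'
  have hnq : ∀ F, IsFacet K F → c ⊆ F → ∀ x ∈ F \ c, ∀ z ∈ F \ c, ¬ q x → ¬ q z :=
    fun F hF hcF x hx z hz hqx hqz => hqx (hq F hF hcF z hz x hx hqz)
  have extends_of : ∀ {F : Finset α} {r : α → Prop}, IsFacet K F → c ⊆ F → 2 ≤ (F \ c).card →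
      (∀ z ∈ F \ c, r z) → ∃ k, FacetExtendsOnSide l c r k := by
    intro F r hF hcF hF₂ hr
    obtain ⟨k, hk, rfl⟩ := List.mem_iff_getElem.1 ((hl.2.1 F).2 hF)
    exact ⟨k, hk, hcF, hF₂, hr⟩
  obtain ⟨k, hk⟩ := extends_of hF hcF hF₂ fun z hz => hq F hF hcF x hx z hz h
  obtain ⟨k', hk'⟩ := extends_of hF' hcF' hF'₂ fun z hz => hnq F' hF' hcF' x' hx' z hz h'
  obtain ⟨m, ⟨hm, hcm, hm₂, hmq⟩, hmfirst⟩ := hl.exists_facetExtendsOnSide_first hq hk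
  obtain ⟨m', ⟨hm', hcm', -, hmq'⟩, hm'first⟩ := hl.exists_facetExtendsOnSide_first hnq hk'
  -- both first indices are the first index of a facet through `c`
  obtain rfl : m = m' := le_antisymm (not_lt.1 fun h => hmfirst m' hm' h hcm')
    (not_lt.1 fun h => hm'first m hm h hcm)
  obtain ⟨z, hz⟩ : (l[m] \ c).Nonempty := Finset.card_pos.1 (by omega)
  exact hmq' z hz (hmq z hz)

end Shellability

section OrderComplex

variable {P : Type*}

theorem IsChainFinset.mono [Preorder P] {s t : Finset P} (ht : IsChainFinset t) (hst : s ⊆ t) :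
    IsChainFinset s :=
  fun x hx y hy => ht x (hst hx) y (hst hy)

theorem IsChainFinset.insert [Preorder P] {s : Finset P} {a : P} (hs : IsChainFinset s)
    (ha : ∀ b ∈ s, a ≤ b ∨ b ≤ a) : IsChainFinset (insert a s) := by
  intro x hx z hz
  rw [Finset.mem_insert] at hx hz
  rcases hx with rfl | hx <;> rcases hz with rfl | hz
  · exact Or.inl le_rfl
  · exact ha z hz
  · exact (ha x hx).symm
  · exact hs x hx z hz

theorem exists_isFacet_orderComplex_superset [Preorder P] [Finite P] {s : Finset P}
    (hs : IsChainFinset s) : ∃ F, IsFacet (orderComplex P) F ∧ s ⊆ F := by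
  obtain ⟨F, hsF, hF⟩ := (Set.toFinite (orderComplex P)).exists_le_maximal (a := s) hs
  exact ⟨F, ⟨hF.1, fun F' hF' h => le_antisymm h (hF.2 hF' h)⟩, hsF⟩

theorem not_posetShellable_of_split_interval [PartialOrder P] [BoundedOrder P] [Finite P]
    (y : P) (side : P → Prop)
    (hside : ∀ z z', ⊥ < z → z ≤ z' → z' < y → (side z ↔ side z'))
    (h₁ : ∃ a b, ⊥ < a ∧ a < b ∧ b < y ∧ side a)
    (h₂ : ∃ a b, ⊥ < a ∧ a < b ∧ b < y ∧ ¬ side a) : ¬ PosetShellable P := by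
  rintro ⟨l, hl⟩
  obtain ⟨a, b, ha, hab, hby, hsa⟩ := h₁
  obtain ⟨a', b', ha', hab', hby', hsa'⟩ := h₂
  have hy : (⊥ : P) < y := ha.trans (hab.trans hby)
  -- the link of this face `c` is the order complex of `(⊥, y)`
  obtain ⟨c, hyc, hc⟩ := (Set.toFinite
      {t : Finset P | IsChainFinset t ∧ ∀ z ∈ t, z = ⊥ ∨ y ≤ z}).exists_le_maximal
    (a := {⊥, y}) ⟨IsChainFinset.insert (fun x hx z hz => by simp_all)
      (fun _ _ => Or.inl bot_le), by simp⟩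
  have hbot : (⊥ : P) ∈ c := hyc (by simp)
  have hyc : y ∈ c := hyc (by simp)
  have hmid : ∀ F, IsFacet (orderComplex P) F → c ⊆ F → ∀ z ∈ F \ c, ⊥ < z ∧ z < y := by
    intro F hF hcF z hz
    rw [Finset.mem_sdiff] at hz
    refine ⟨bot_lt_iff_ne_bot.2 fun h => hz.2 (h ▸ hbot), ?_⟩
    rcases hF.1 z hz.1 y (hcF hyc) with hzy | hyz
    · exact hzy.lt_of_ne fun h => hz.2 (h ▸ hyc)
    · refine absurd (hc.2 ⟨hF.1.mono (Finset.insert_subset hz.1 hcF), ?_⟩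
        (Finset.subset_insert z c) (Finset.mem_insert_self z c)) hz.2
      simpa [hyz] using hc.1.2
  have hsides : ∀ F, IsFacet (orderComplex P) F → c ⊆ F →
      ∀ x ∈ F \ c, ∀ z ∈ F \ c, side x → side z := by
    intro F hF hcF x hx z hz
    rcases hF.1 x (Finset.mem_sdiff.1 hx).1 z (Finset.mem_sdiff.1 hz).1 with hxz | hzx
    · exact (hside x z (hmid F hF hcF x hx).1 hxz (hmid F hF hcF z hz).2).1
    · exact (hside z x (hmid F hF hcF z hz).1 hzx (hmid F hF hcF x hx).2).2
  have hfacet : ∀ a b : P, ⊥ < a → a < b → b < y → ∃ F, IsFacet (orderComplex P) F ∧ c ⊆ F ∧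
      2 ≤ (F \ c).card ∧ a ∈ F \ c := by
    intro a b ha hab hby
    have hout : ∀ u, ⊥ < u → u < y → u ∉ c := fun u hu huy huc => by
      rcases hc.1.2 u huc with rfl | h
      exacts [hu.ne rfl, (h.trans_lt huy).false]
    have hbelow : ∀ u ≤ y, ∀ v ∈ c, u ≤ v ∨ v ≤ u := fun u hu v hv => by
      rcases hc.1.2 v hv with rfl | h
      exacts [Or.inr bot_le, Or.inl (hu.trans h)]
    have hchain : IsChainFinset (insert a (insert b c)) := by
      refine (hc.1.1.insert (hbelow b hby.le)).insert fun v hv => ?_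
      rcases Finset.mem_insert.1 hv with rfl | hv
      exacts [Or.inl hab.le, hbelow a (hab.trans hby).le v hv]
    obtain ⟨F, hF, hsub⟩ := exists_isFacet_orderComplex_superset hchain
    have hsd : ({a, b} : Finset P) ⊆ F \ c := by
      intro u hu
      simp only [Finset.mem_insert, Finset.mem_singleton] at hu
      rcases hu with rfl | rfl
      · exact Finset.mem_sdiff.2 ⟨hsub (by simp), hout u ha (hab.trans hby)⟩
      · exact Finset.mem_sdiff.2 ⟨hsub (by simp), hout u (ha.trans hab) hby⟩
    refine ⟨F, hF, fun u hu => hsub (by simp [hu]), ?_, hsd (by simp)⟩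
    exact (Finset.card_pair hab.ne).symm.le.trans (Finset.card_le_card hsd)
  obtain ⟨F, hF, hcF, hF₂, haF⟩ := hfacet a b ha hab hby
  obtain ⟨F', hF', hcF', hF'₂, haF'⟩ := hfacet a' b' ha' hab' hby'
  exact hsa' (hl.side_propagates hsides hF hF' hcF hcF' hF₂ hF'₂ haF haF' hsa)

end OrderComplex

namespace Multigraph

variable (G : Multigraph)

def Joins (e : G.E) (u v : G.V) : Prop :=
  (G.fst e = u ∧ G.snd e = v) ∨ (G.fst e = v ∧ G.snd e = u)

/-- `N*(u₁) ∪ N*(u₂)`. -/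
def outerNeighbors (u₁ u₂ : G.V) : Set G.V :=
  {w | w ≠ u₁ ∧ w ≠ u₂ ∧ (G.adj u₁ w ∨ G.adj u₂ w)}

def baseVertex : G.El → G.V := Sum.elim id G.fst

variable {G} {e e' : G.E} {u v : G.V} {S A : Set G.El}

theorem Joins.symm (h : G.Joins e u v) : G.Joins e v u := Or.symm h

theorem Joins.ne (h : G.Joins e u v) : u ≠ v := by
  rintro rfl
  rcases h with ⟨h₁, h₂⟩ | ⟨h₁, h₂⟩ <;> exact G.no_loop e (h₁.trans h₂.symm)

theorem Joins.ends_mem {W : Set G.V} (h : G.Joins e u v) (hu : u ∈ W) (hv : v ∈ W) :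
    G.fst e ∈ W ∧ G.snd e ∈ W := by
  rcases h with ⟨rfl, rfl⟩ | ⟨rfl, rfl⟩
  exacts [⟨hu, hv⟩, ⟨hv, hu⟩]

theorem Joins.sameEnds (h : G.Joins e u v) (h' : G.Joins e' u v) : G.sameEnds e e' := by
  unfold Multigraph.sameEnds
  rcases h with ⟨rfl, rfl⟩ | ⟨rfl, rfl⟩ <;> rcases h' with ⟨h₁, h₂⟩ | ⟨h₁, h₂⟩ <;> simp [*]

theorem sameEnds_iff_joins : G.sameEnds e e' ↔ G.Joins e' (G.fst e) (G.snd e) := by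
  unfold sameEnds Joins
  constructor <;> rintro (⟨h₁, h₂⟩ | ⟨h₁, h₂⟩) <;> simp [*]

theorem Joins.of_sameEnds (he : G.Joins e u v) (h : G.sameEnds e e') : G.Joins e' u v := by
  rcases he with ⟨rfl, rfl⟩ | ⟨rfl, rfl⟩
  exacts [sameEnds_iff_joins.1 h, (sameEnds_iff_joins.1 h).symm]

theorem multiple_of_sameEnds (hne : e ≠ e') (h : G.sameEnds e e') : G.Multiple e :=
  ⟨e', hne.symm, h⟩

instance : Std.Symm G.adj where
  symm _ _ := fun ⟨e, he⟩ => ⟨e, Joins.symm he⟩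

instance : Std.Symm (G.adjIn S) where
  symm _ _ := fun ⟨hu, hv, e, he, hm⟩ => ⟨hv, hu, e, Joins.symm he, hm⟩

theorem outerNeighbors_nonempty (hconn : G.Connected) {x : G.V} (hx₁ : x ≠ u) (hx₂ : x ≠ v) :
    (G.outerNeighbors u v).Nonempty := by
  by_contra hN
  have hstay : ∀ z, G.reachable u z → z = u ∨ z = v := by
    intro z hz
    induction hz with
    | refl => exact Or.inl rfl
    | @tail y z _ hyz ih =>
      by_contra hz
      push Not at hz
      rcases ih with rfl | rfl
      exacts [hN ⟨z, hz.1, hz.2, Or.inl hyz⟩, hN ⟨z, hz.1, hz.2, Or.inr hyz⟩]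
  rcases hstay x (hconn.2 u x) with h | h
  exacts [hx₁ h, hx₂ h]

theorem inl_mem_componentIn_iff :
    Sum.inl u ∈ G.componentIn S v ↔ Relation.ReflTransGen (G.adjIn S) v u := by
  simp [componentIn]

theorem mem_of_reflTransGen_adjIn (hv : Sum.inl v ∈ S)
    (h : Relation.ReflTransGen (G.adjIn S) v u) : Sum.inl u ∈ S := by
  rcases h.cases_tail with rfl | ⟨_, -, hu⟩
  exacts [hv, hu.2.1]

theorem mem_componentIn_iff (hv : Sum.inl v ∈ S) {x : G.El} :
    x ∈ G.componentIn S v ↔ x ∈ S ∧ Relation.ReflTransGen (G.adjIn S) v (G.baseVertex x) := by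
  rcases x with u | e
  · rw [inl_mem_componentIn_iff]
    exact ⟨fun h => ⟨mem_of_reflTransGen_adjIn hv h, h⟩, And.right⟩
  · simp [componentIn, baseVertex]

theorem componentIn_eq_of_reflTransGen (h : Relation.ReflTransGen (G.adjIn S) u v) :
    G.componentIn S u = G.componentIn S v := by
  have key : ∀ w, Relation.ReflTransGen (G.adjIn S) u w ↔
      Relation.ReflTransGen (G.adjIn S) v w :=
    fun w => ⟨(symm_of _ h).trans, h.trans⟩
  ext x
  simp only [componentIn, Set.mem_ofPred_eq, key]

theorem inl_baseVertex_mem (hS : G.SemiInduced S) {x : G.El} (hx : x ∈ S) :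
    Sum.inl (G.baseVertex x) ∈ S := by
  rcases x with u | e
  exacts [hx, (hS.1 e hx).2.1]

/-- The components of an `A`-even subgraph partition it, so it meets `A` evenly. -/
theorem AEvenMember.even_ncard_inter (h : G.AEvenMember A S) : Even (S ∩ A).ncard := by
  set φ : G.El → Set G.El := fun x => G.componentIn S (G.baseVertex x)
  have hfib : ∀ x₀ ∈ S, {x ∈ S ∩ A | φ x = φ x₀} = φ x₀ ∩ A := by
    intro x₀ hx₀
    ext x
    simp only [φ, Set.mem_ofPred_eq, Set.mem_inter_iff,
      mem_componentIn_iff (inl_baseVertex_mem h.1 hx₀)]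
    constructor
    · rintro ⟨⟨hxS, hxA⟩, heq⟩
      refine ⟨⟨hxS, inl_mem_componentIn_iff.1 ?_⟩, hxA⟩
      exact heq ▸ inl_mem_componentIn_iff.2 Relation.ReflTransGen.refl
    · rintro ⟨⟨hxS, hr⟩, hxA⟩
      exact ⟨⟨hxS, hxA⟩, (componentIn_eq_of_reflTransGen hr).symm⟩
  set T : Finset G.El := Finset.univ.filter (· ∈ S ∩ A)
  have hT : (T : Set G.El) = S ∩ A := by ext; simp [T]
  rw [← hT, Set.ncard_coe_finset,
    Finset.card_eq_sum_card_fiberwise fun x hx => Finset.mem_image_of_mem φ hx]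
  refine Finset.even_sum _ fun C hC => ?_
  obtain ⟨x₀, hx₀, rfl⟩ := Finset.mem_image.1 hC
  have hx₀S : x₀ ∈ S := (hT ▸ Finset.mem_coe.2 hx₀ : x₀ ∈ S ∩ A).1
  rw [← Set.ncard_coe_finset, Finset.coe_filter]
  simp only [T, Finset.mem_filter, Finset.mem_univ, true_and]
  rw [hfib x₀ hx₀S]
  exact h.2 _ (inl_baseVertex_mem h.1 hx₀S)

theorem aEvenMember_of_reflTransGen (hS : G.SemiInduced S) (hSA : S ⊆ A) (heven : Even S.ncard)
    (r : G.V) (hr : ∀ u, Sum.inl u ∈ S → Relation.ReflTransGen (G.adjIn S) r u) :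
    G.AEvenMember A S := by
  refine ⟨hS, fun v hv => ?_⟩
  have hcomp : G.componentIn S v = S := by
    ext x
    rw [mem_componentIn_iff hv]
    exact ⟨And.left, fun hx => ⟨hx, (symm_of _ (hr v hv)).trans
      (hr _ (inl_baseVertex_mem hS hx))⟩⟩
  rwa [hcomp, Set.inter_eq_left.2 hSA]

end Multigraph

def PISpec.induced (G : Multigraph) (W : Set G.V) : PISpec G where
  W := W
  R := {e | G.fst e ∈ W ∧ G.snd e ∈ W}
  endpoints_mem _ he := he
  keeps e h₁ h₂ := ⟨e, ⟨h₁, h₂⟩, Or.inl ⟨rfl, rfl⟩⟩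
  bundle_cond _ he := Or.inl fun _ h =>
    (Multigraph.sameEnds_iff_joins.1 h).ends_mem he.1 he.2

namespace PISpec

variable {G : Multigraph} (s : PISpec G)

theorem joins_toGraph_iff {e : s.toGraph.E} {a b : s.toGraph.V} :
    s.toGraph.Joins e a b ↔ G.Joins e.1 a.1 b.1 := by
  obtain ⟨a, ha⟩ := a
  obtain ⟨b, hb⟩ := b
  simp only [Multigraph.Joins, toGraph, Subtype.mk.injEq]

theorem sameEnds_toGraph_iff {e e' : s.toGraph.E} :
    s.toGraph.sameEnds e e' ↔ G.sameEnds e.1 e'.1 := by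
  simp [Multigraph.sameEnds, toGraph, Subtype.ext_iff]

theorem multiple_of_multiple_toGraph {e : s.toGraph.E} (h : s.toGraph.Multiple e) :
    G.Multiple e.1 :=
  let ⟨e', hne, he'⟩ := h
  ⟨e'.1, fun h => hne (Subtype.ext h), (s.sameEnds_toGraph_iff).1 he'⟩

theorem adj_toGraph_iff {a b : s.toGraph.V} : s.toGraph.adj a b ↔ G.adj a.1 b.1 := by
  constructor
  · rintro ⟨e, he⟩
    exact ⟨e.1, (s.joins_toGraph_iff).1 he⟩
  · rintro ⟨e, he : G.Joins e a.1 b.1⟩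
    have hends := he.ends_mem a.2 b.2
    obtain ⟨e', he'R, he'⟩ := s.keeps e hends.1 hends.2
    exact ⟨⟨e', he'R⟩, (s.joins_toGraph_iff).2 (he.of_sameEnds he')⟩

theorem mem_outerNeighbors_toGraph_iff {a b c : s.toGraph.V} :
    c ∈ s.toGraph.outerNeighbors a b ↔ c.1 ∈ G.outerNeighbors a.1 b.1 := by
  have hval : ∀ {x y : s.toGraph.V}, x = y ↔ x.1 = y.1 := ⟨congrArg Subtype.val, Subtype.ext⟩
  exact and_congr (not_congr hval) (and_congr (not_congr hval)
    (or_congr s.adj_toGraph_iff s.adj_toGraph_iff))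

end PISpec

namespace EvenPoset

variable {G : Multigraph} {A : Set G.El} {a b : EvenPoset G A}

instance : Finite (EvenPoset G A) := Subtype.finite

theorem bot_lt_of_mem {x : G.El} (hx : x ∈ a.1) : ⊥ < a :=
  bot_lt_iff_ne_bot.2 fun h => by rw [h] at hx; exact hx

theorem lt_of_subset_of_mem {x : G.El} (h : a.1 ⊆ b.1) (hb : x ∈ b.1) (ha : x ∉ a.1) : a < b :=
  lt_of_le_of_ne h fun hab => ha (hab ▸ hb)

end EvenPoset

structure Multigraph.BundleWithTwoNeighbors (H : Multigraph) where
  v₁ : H.V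
  v₂ : H.V
  w₁ : H.V
  w₂ : H.V
  f₀ : H.E
  f₁ : H.E
  joins_of_multiple : ∀ e, H.Multiple e → H.Joins e v₁ v₂
  f₀_ne_f₁ : f₀ ≠ f₁
  sameEnds_f₀_f₁ : H.sameEnds f₀ f₁
  w₁_mem : w₁ ∈ H.outerNeighbors v₁ v₂
  w₂_mem : w₂ ∈ H.outerNeighbors v₁ v₂
  w₁_ne_w₂ : w₁ ≠ w₂

namespace Multigraph.BundleWithTwoNeighbors

variable {H : Multigraph} (C : H.BundleWithTwoNeighbors) {S : Set H.El} {x z : H.V}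

theorem multiple_f₀ : H.Multiple C.f₀ := multiple_of_sameEnds C.f₀_ne_f₁ C.sameEnds_f₀_f₁

theorem joins_f₀ : H.Joins C.f₀ C.v₁ C.v₂ := C.joins_of_multiple _ C.multiple_f₀

theorem joins_f₁ : H.Joins C.f₁ C.v₁ C.v₂ := C.joins_f₀.of_sameEnds C.sameEnds_f₀_f₁

theorem multiple_f₁ : H.Multiple C.f₁ :=
  multiple_of_sameEnds C.f₀_ne_f₁.symm (C.joins_f₁.sameEnds C.joins_f₀)

theorem v₁_ne_v₂ : C.v₁ ≠ C.v₂ := C.joins_f₀.ne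

theorem ends_ne_of_multiple {e : H.E} (hz : z ∈ H.outerNeighbors C.v₁ C.v₂)
    (he : H.Multiple e) : H.fst e ≠ z ∧ H.snd e ≠ z := by
  rcases C.joins_of_multiple e he with ⟨h₁, h₂⟩ | ⟨h₁, h₂⟩ <;> rw [h₁, h₂]
  exacts [⟨hz.1.symm, hz.2.1.symm⟩, ⟨hz.2.1.symm, hz.1.symm⟩]

theorem inl_mem_of_inr_mem (hS : H.SemiInduced S) {e : H.E} (he : Sum.inr e ∈ S) :
    Sum.inl C.v₁ ∈ S ∧ Sum.inl C.v₂ ∈ S := by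
  obtain ⟨hm, h₁, h₂⟩ := hS.1 e he
  rcases C.joins_of_multiple e hm with ⟨ha, hb⟩ | ⟨ha, hb⟩
  exacts [⟨ha ▸ h₁, hb ▸ h₂⟩, ⟨hb ▸ h₂, ha ▸ h₁⟩]

theorem adjIn_of_adj (hz : z ∈ H.outerNeighbors C.v₁ C.v₂) (h : H.adj x z)
    (hx : Sum.inl x ∈ S) (hzS : Sum.inl z ∈ S) : H.adjIn S x z := by
  obtain ⟨e, he⟩ := h
  refine ⟨hx, hzS, e, he, fun hm => ?_⟩
  have := C.ends_ne_of_multiple hz hm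
  rcases he with ⟨-, h⟩ | ⟨h, -⟩
  exacts [(this.2 h).elim, (this.1 h).elim]

theorem reflTransGen_adjIn (h₁ : Sum.inl C.v₁ ∈ S) (h₂ : Sum.inl C.v₂ ∈ S)
    (hf : Sum.inr C.f₀ ∈ S) {u : H.V} (hu : Sum.inl u ∈ S)
    (hu' : u = C.v₁ ∨ u = C.v₂ ∨ u ∈ H.outerNeighbors C.v₁ C.v₂) :
    Relation.ReflTransGen (H.adjIn S) C.v₁ u := by
  have h₁₂ : H.adjIn S C.v₁ C.v₂ := ⟨h₁, h₂, C.f₀, C.joins_f₀, fun _ => hf⟩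
  rcases hu' with rfl | rfl | hz
  · exact .refl
  · exact .single h₁₂
  · rcases hz.2.2 with h | h
    · exact .single (C.adjIn_of_adj hz h h₁ hu)
    · exact .tail (.single h₁₂) (C.adjIn_of_adj hz h h₂ hu)

def elems : Set H.El :=
  {Sum.inl C.v₁, Sum.inl C.v₂, Sum.inl C.w₁, Sum.inl C.w₂, Sum.inr C.f₀, Sum.inr C.f₁}

def bundleElems : Set H.El := {Sum.inl C.v₁, Sum.inl C.v₂, Sum.inr C.f₀, Sum.inr C.f₁}

theorem ncard_elems : C.elems.ncard = 6 := by
  have := C.v₁_ne_v₂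
  have := C.w₁_mem
  have := C.w₂_mem
  have := C.w₁_ne_w₂
  have := C.f₀_ne_f₁
  simp_all [elems, outerNeighbors, Set.ncard_insert_of_notMem, eq_comm]

theorem semiInduced_of_subset (hS : S ⊆ C.elems) (h₁ : Sum.inl C.v₁ ∈ S)
    (h₂ : Sum.inl C.v₂ ∈ S) (hf : Sum.inr C.f₀ ∈ S) : H.SemiInduced S := by
  refine ⟨fun e he => ?_,
    fun e hm _ _ => ⟨C.f₀, (C.joins_of_multiple e hm).sameEnds C.joins_f₀, hf⟩⟩
  have hmult : H.Multiple e := by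
    rcases (by simpa [elems] using hS he : e = C.f₀ ∨ e = C.f₁) with rfl | rfl
    exacts [C.multiple_f₀, C.multiple_f₁]
  exact ⟨hmult, (C.joins_of_multiple e hmult).ends_mem (W := {u | Sum.inl u ∈ S}) h₁ h₂⟩

theorem reflTransGen_adjIn_elems {u : H.V} (hu : Sum.inl u ∈ C.elems) :
    Relation.ReflTransGen (H.adjIn C.elems) C.v₁ u := by
  refine C.reflTransGen_adjIn (by simp [elems]) (by simp [elems]) (by simp [elems]) hu ?_
  simp only [elems, Set.mem_insert_iff, Set.mem_singleton_iff, Sum.inl.injEq, reduceCtorEq,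
    or_false] at hu
  rcases hu with rfl | rfl | rfl | rfl
  exacts [Or.inl rfl, Or.inr (Or.inl rfl), Or.inr (Or.inr C.w₁_mem), Or.inr (Or.inr C.w₂_mem)]

theorem aEvenMember_elems : H.AEvenMember C.elems C.elems :=
  aEvenMember_of_reflTransGen (C.semiInduced_of_subset subset_rfl (by simp [elems])
    (by simp [elems]) (by simp [elems])) subset_rfl (by rw [C.ncard_elems]; decide) C.v₁
    fun _ => C.reflTransGen_adjIn_elems

theorem aEvenMember_pair (hx : x = C.v₁ ∨ x = C.v₂) (hz : z ∈ H.outerNeighbors C.v₁ C.v₂)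
    (hzE : Sum.inl z ∈ C.elems) (h : H.adj x z) :
    H.AEvenMember C.elems {Sum.inl x, Sum.inl z} := by
  have hxz : x ≠ z := by
    rcases hx with rfl | rfl
    exacts [hz.1.symm, hz.2.1.symm]
  refine aEvenMember_of_reflTransGen ⟨fun e he => by simp at he, fun e hm hf hs => ?_⟩ ?_
    (by rw [Set.ncard_pair (by simpa using hxz)]; decide) x fun u hu => ?_
  · have hne := C.ends_ne_of_multiple hz hm
    simp only [Set.mem_insert_iff, Set.mem_singleton_iff, Sum.inl.injEq] at hf hs
    exact (H.no_loop e ((hf.resolve_right hne.1).trans (hs.resolve_right hne.2).symm)).elim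
  · rintro _ (rfl | rfl)
    · rcases hx with rfl | rfl <;> simp [elems]
    · exact hzE
  · simp only [Set.mem_insert_iff, Set.mem_singleton_iff, Sum.inl.injEq] at hu
    rcases hu with rfl | rfl
    exacts [.refl, .single (C.adjIn_of_adj hz h (by simp) (by simp))]

theorem aEvenMember_bundle_insert (hz : z ∈ H.outerNeighbors C.v₁ C.v₂)
    (hzE : Sum.inl z ∈ C.elems) :
    H.AEvenMember C.elems {Sum.inl C.v₁, Sum.inl C.v₂, Sum.inl z, Sum.inr C.f₀} := by
  have hsub : ({Sum.inl C.v₁, Sum.inl C.v₂, Sum.inl z, Sum.inr C.f₀} : Set H.El) ⊆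
      C.elems := by
    rintro _ (rfl | rfl | rfl | rfl) <;> simp_all [elems]
  have := C.v₁_ne_v₂
  have := hz.1
  have := hz.2.1
  refine aEvenMember_of_reflTransGen (C.semiInduced_of_subset hsub (by simp) (by simp) (by simp))
    hsub ?_ C.v₁ fun u hu => C.reflTransGen_adjIn (by simp) (by simp) (by simp) hu ?_
  · simp_all [Set.ncard_insert_of_notMem, eq_comm]
    decide
  · simp only [Set.mem_insert_iff, Set.mem_singleton_iff, Sum.inl.injEq, reduceCtorEq,
      or_false] at hu
    rcases hu with rfl | rfl | rfl
    exacts [Or.inl rfl, Or.inr (Or.inl rfl), Or.inr (Or.inr hz)]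

def whole : EvenPoset H C.elems := ⟨C.elems, Or.inr (Or.inr C.aEvenMember_elems)⟩

theorem exists_chain (hz : z ∈ H.outerNeighbors C.v₁ C.v₂) (hzE : Sum.inl z ∈ C.elems) :
    ∃ a b : EvenPoset H C.elems, ⊥ < a ∧ a < b ∧ b < C.whole ∧ Sum.inl z ∈ a.1 ∧
      b.1 ⊆ {Sum.inl C.v₁, Sum.inl C.v₂, Sum.inl z, Sum.inr C.f₀} := by
  obtain ⟨x, hx, hxz⟩ : ∃ x, (x = C.v₁ ∨ x = C.v₂) ∧ H.adj x z := by
    rcases hz.2.2 with h | h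
    exacts [⟨_, Or.inl rfl, h⟩, ⟨_, Or.inr rfl, h⟩]
  refine ⟨⟨_, Or.inr (Or.inr (C.aEvenMember_pair hx hz hzE hxz))⟩,
    ⟨_, Or.inr (Or.inr (C.aEvenMember_bundle_insert hz hzE))⟩,
    EvenPoset.bot_lt_of_mem (x := Sum.inl z) (by simp), ?_, ?_, by simp, subset_rfl⟩
  · refine EvenPoset.lt_of_subset_of_mem (x := Sum.inr C.f₀) ?_ (by simp) (by simp)
    rintro _ (rfl | rfl)
    · rcases hx with rfl | rfl <;> simp
    · simp
  · refine EvenPoset.lt_of_subset_of_mem (x := Sum.inr C.f₁) ?_ (by simp [whole, elems])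
      (by simpa using C.f₀_ne_f₁.symm)
    rintro _ (rfl | rfl | rfl | rfl) <;> simp_all [whole, elems]

/-- A semi-induced subgraph contains both ends of the bundle only together with one of its
edges, and an edge only together with both ends. -/
theorem ncard_inter_bundleElems_ne_two (hS : H.SemiInduced S) (hSE : S ⊆ C.elems) :
    (S ∩ C.bundleElems).ncard ≠ 2 := by
  have h₁₂ : Sum.inl C.v₁ ≠ (Sum.inl C.v₂ : H.El) := by simpa using C.v₁_ne_v₂
  by_cases hv : Sum.inl C.v₁ ∈ S ∧ Sum.inl C.v₂ ∈ S
  · obtain ⟨hf₁, hf₂⟩ := C.joins_f₀.ends_mem (W := {u | Sum.inl u ∈ S}) hv.1 hv.2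
    obtain ⟨f, -, hfS⟩ := hS.2 C.f₀ C.multiple_f₀ hf₁ hf₂
    have hf : f = C.f₀ ∨ f = C.f₁ := by simpa [elems] using hSE hfS
    have h₃ : ({Sum.inl C.v₁, Sum.inl C.v₂, Sum.inr f} : Set H.El) ⊆ S ∩ C.bundleElems := by
      rintro _ (rfl | rfl | rfl) <;> rcases hf with rfl | rfl <;> simp_all [bundleElems]
    have := Set.ncard_le_ncard h₃
    rw [Set.ncard_eq_three.2 ⟨_, _, _, h₁₂, by simp, by simp, rfl⟩] at this
    omega
  · have hlt : S ∩ C.bundleElems ⊂ {Sum.inl C.v₁, Sum.inl C.v₂} := by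
      refine ⟨fun y hy => ?_, fun h => hv ⟨(h (by simp)).1, (h (by simp)).1⟩⟩
      rcases (by simpa [bundleElems] using hy.2 : y = Sum.inl C.v₁ ∨ y = Sum.inl C.v₂ ∨
        y = Sum.inr C.f₀ ∨ y = Sum.inr C.f₁) with rfl | rfl | rfl | rfl
      · simp
      · simp
      · exact (hv (C.inl_mem_of_inr_mem hS hy.1)).elim
      · exact (hv (C.inl_mem_of_inr_mem hS hy.1)).elim
    have := Set.ncard_lt_ncard hlt
    rw [Set.ncard_pair h₁₂] at this
    omega

theorem aEvenMember_of_lt {Y : EvenPoset H C.elems} (hY : ⊥ < Y) (hY' : Y < C.whole) :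
    H.AEvenMember C.elems Y.1 ∧ Y.1 ⊂ C.elems := by
  obtain ⟨Y, hY₀ | hY₀ | hY₀⟩ := Y
  · exact (bot_lt_iff_ne_bot.1 hY (Subtype.ext hY₀)).elim
  · refine (hY'.ne (Subtype.ext (subset_antisymm hY'.le ?_))).elim
    show C.elems ⊆ Y
    rw [hY₀]
    rintro _ h e rfl
    rcases (by simpa [whole, elems] using h : e = C.f₀ ∨ e = C.f₁) with rfl | rfl
    exacts [C.multiple_f₀, C.multiple_f₁]
  · exact ⟨hY₀, hY'⟩

/-- The elements of `(⊥, C.whole)` have even size, which leaves no room for an element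
containing `w₂` above one that does not. -/
theorem mem_of_mem_of_le {Z Z' : EvenPoset H C.elems} (hZ : ⊥ < Z) (hZZ' : Z ≤ Z')
    (hZ' : Z' < C.whole) (hw : Sum.inl C.w₂ ∈ Z'.1) : Sum.inl C.w₂ ∈ Z.1 := by
  by_contra hZw
  obtain ⟨hZe, hZsub⟩ := C.aEvenMember_of_lt hZ (hZZ'.trans_lt hZ')
  obtain ⟨hZ'e, hZ'sub⟩ := C.aEvenMember_of_lt (hZ.trans_le hZZ') hZ'
  have heven : ∀ {Y}, H.AEvenMember C.elems Y → Y ⊆ C.elems → Even Y.ncard :=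
    fun hY hsub => by simpa [Set.inter_eq_left.2 hsub] using hY.even_ncard_inter
  have hsplit : ∀ Y : Set H.El,
      (Y ∩ C.bundleElems).ncard + (Y \ C.bundleElems).ncard = Y.ncard :=
    fun Y => Set.ncard_inter_add_ncard_sdiff_eq_ncard Y _
  have hcore : (Z.1 ∩ C.bundleElems).ncard ≤ (Z'.1 ∩ C.bundleElems).ncard :=
    Set.ncard_le_ncard (Set.inter_subset_inter_left _ hZZ')
  have hw₂ : Sum.inl C.w₂ ∉ C.bundleElems := by
    have := C.w₂_mem
    simp_all [bundleElems, outerNeighbors]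
  have hout : (Z.1 \ C.bundleElems).ncard < (Z'.1 \ C.bundleElems).ncard :=
    Set.ncard_lt_ncard ⟨Set.sdiff_subset_sdiff_left hZZ', fun h => hZw (h ⟨hw, hw₂⟩).1⟩
  have hout₂ : (Z'.1 \ C.bundleElems).ncard ≤ 2 := by
    refine (Set.ncard_le_ncard (t := {Sum.inl C.w₁, Sum.inl C.w₂}) fun y hy => ?_).trans
      ((Set.ncard_insert_le _ _).trans (by simp))
    have := hZ'sub.1 hy.1
    have := hy.2
    simp_all [elems, bundleElems]
  have hpos : 0 < Z.1.ncard := (Set.ncard_pos).2 (Set.nonempty_iff_ne_empty.2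
    fun h => bot_lt_iff_ne_bot.1 hZ (Subtype.ext h))
  have hlt : Z'.1.ncard < 6 := C.ncard_elems ▸ Set.ncard_lt_ncard hZ'sub
  have hZ₂ := C.ncard_inter_bundleElems_ne_two hZe.1 hZsub.1
  have hZ'₂ := C.ncard_inter_bundleElems_ne_two hZ'e.1 hZ'sub.1
  obtain ⟨k, hk⟩ := heven hZe hZsub.1
  obtain ⟨k', hk'⟩ := heven hZ'e hZ'sub.1
  have := hsplit Z.1
  have := hsplit Z'.1
  omega

theorem not_posetShellable : ¬ PosetShellable (EvenPoset H C.elems) := by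
  refine not_posetShellable_of_split_interval C.whole (fun Z => Sum.inl C.w₂ ∈ Z.1)
    (fun Z Z' hZ hZZ' hZ' => ⟨fun h => hZZ' h, C.mem_of_mem_of_le hZ hZZ' hZ'⟩) ?_ ?_
  · obtain ⟨a, b, ha, hab, hb, hwa, -⟩ := C.exists_chain C.w₂_mem (by simp [elems])
    exact ⟨a, b, ha, hab, hb, hwa⟩
  · obtain ⟨a, b, ha, hab, hb, -, hsub⟩ := C.exists_chain C.w₁_mem (by simp [elems])
    refine ⟨a, b, ha, hab, hb, fun h => ?_⟩
    have := hsub (hab.le h)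
    have := C.w₂_mem
    have := C.w₁_ne_w₂
    simp_all [outerNeighbors, eq_comm]

theorem admissible_elems (hV : ∀ v, v = C.v₁ ∨ v = C.v₂ ∨ v = C.w₁ ∨ v = C.w₂) :
    H.Admissible C.elems := by
  have hmemV : ∀ v, Sum.inl v ∈ C.elems := fun v => by
    rcases hV v with rfl | rfl | rfl | rfl <;> simp [elems]
  have hreach : ∀ u v, H.reachable u v := by
    have h₁ : ∀ v, H.reachable C.v₁ v := fun v => Relation.ReflTransGen.mono
      (fun _ _ ⟨_, _, e, he, _⟩ => ⟨e, he⟩) _ _ (C.reflTransGen_adjIn_elems (hmemV v))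
    exact fun u v => (symm_of (Relation.ReflTransGen H.adj) (h₁ u)).trans (h₁ v)
  refine ⟨fun e he => ?_, fun v => ?_, fun v _ => hmemV v, fun e he => ?_⟩
  · rcases (by simpa [elems] using he : e = C.f₀ ∨ e = C.f₁) with rfl | rfl
    exacts [C.multiple_f₀, C.multiple_f₁]
  · have hset : {u | H.reachable v u ∧ Sum.inl u ∈ C.elems} = {C.v₁, C.v₂, C.w₁, C.w₂} := by
      ext u
      simpa [hreach v u, hmemV u] using hV u
    have := C.v₁_ne_v₂
    have := C.w₁_mem
    have := C.w₂_mem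
    have := C.w₁_ne_w₂
    rw [hset]
    simp_all [outerNeighbors, Set.ncard_insert_of_notMem, eq_comm]
    decide
  · have hset : {e' | H.sameEnds e e' ∧ Sum.inr e' ∈ C.elems} = {C.f₀, C.f₁} := by
      ext e'
      simp only [elems, Set.mem_ofPred_eq, Set.mem_insert_iff, Set.mem_singleton_iff,
        reduceCtorEq, Sum.inr.injEq, false_or]
      refine ⟨And.right, fun h => ⟨?_, h⟩⟩
      rcases h with rfl | rfl
      exacts [(C.joins_of_multiple e he).sameEnds C.joins_f₀,
        (C.joins_of_multiple e he).sameEnds C.joins_f₁]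
    refine ⟨⟨C.f₀, (C.joins_of_multiple e he).sameEnds C.joins_f₀, by simp [elems]⟩, ?_⟩
    rw [hset, Set.ncard_pair C.f₀_ne_f₁]
    decide

def vertices : Set H.V := {C.v₁, C.v₂, C.w₁, C.w₂}

def restrict : (PISpec.induced H C.vertices).toGraph.BundleWithTwoNeighbors where
  v₁ := ⟨C.v₁, show C.v₁ ∈ C.vertices by simp [vertices]⟩
  v₂ := ⟨C.v₂, show C.v₂ ∈ C.vertices by simp [vertices]⟩
  w₁ := ⟨C.w₁, show C.w₁ ∈ C.vertices by simp [vertices]⟩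
  w₂ := ⟨C.w₂, show C.w₂ ∈ C.vertices by simp [vertices]⟩
  f₀ := ⟨C.f₀, C.joins_f₀.ends_mem (by simp [vertices]) (by simp [vertices])⟩
  f₁ := ⟨C.f₁, C.joins_f₁.ends_mem (by simp [vertices]) (by simp [vertices])⟩
  joins_of_multiple e he := (PISpec.joins_toGraph_iff _).2
    (C.joins_of_multiple _ (PISpec.multiple_of_multiple_toGraph _ he))
  f₀_ne_f₁ h := C.f₀_ne_f₁ (congrArg Subtype.val h)
  sameEnds_f₀_f₁ := (PISpec.sameEnds_toGraph_iff _).2 C.sameEnds_f₀_f₁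
  w₁_mem := (PISpec.mem_outerNeighbors_toGraph_iff _).2 C.w₁_mem
  w₂_mem := (PISpec.mem_outerNeighbors_toGraph_iff _).2 C.w₂_mem
  w₁_ne_w₂ h := C.w₁_ne_w₂ (congrArg Subtype.val h)

end Multigraph.BundleWithTwoNeighbors

theorem Multigraph.BundleWithTwoNeighbors.not_gStar {H : Multigraph}
    (C : H.BundleWithTwoNeighbors) : ¬ GStar H := fun hG =>
  C.restrict.not_posetShellable <| hG _ _ <| C.restrict.admissible_elems
    fun ⟨v, (hv : v ∈ C.vertices)⟩ => by
      rcases (by simpa [vertices] using hv : v = C.v₁ ∨ v = C.v₂ ∨ v = C.w₁ ∨ v = C.w₂)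
        with rfl | rfl | rfl | rfl
      exacts [Or.inl rfl, Or.inr (Or.inl rfl), Or.inr (Or.inr (Or.inl rfl)),
        Or.inr (Or.inr (Or.inr rfl))]

/-- Let `G` be a connected non-simple graph in `𝒢*` with at least `3` vertices, whose
(unique) bundle has endpoints `u₁` and `u₂`.  Then `|N*(u₁) ∪ N*(u₂)| = 1`, where
`N*(u) = N_G(u) ∖ {u₁, u₂}`. -/
theorem connected_nonsimple_gstar_neighbors (G : Multigraph)
    (hconn : G.Connected) (hns : ¬ G.Simple) (hG : GStar G)
    (hV : 3 ≤ Nat.card G.V) (u₁ u₂ : G.V)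
    (hB : ∀ e, G.Multiple e →
      (G.fst e = u₁ ∧ G.snd e = u₂) ∨ (G.fst e = u₂ ∧ G.snd e = u₁)) :
    {w : G.V | w ≠ u₁ ∧ w ≠ u₂ ∧ (G.adj u₁ w ∨ G.adj u₂ w)}.ncard = 1 := by
  obtain ⟨e₀, e₁, hne, hse⟩ : ∃ e₀ e₁, e₁ ≠ e₀ ∧ G.sameEnds e₀ e₁ := by
    simpa [Multigraph.Simple, Multigraph.Multiple] using hns
  have hsub : (G.outerNeighbors u₁ u₂).Subsingleton := fun w₁ hw₁ w₂ hw₂ =>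
    by_contra fun hw => (Multigraph.BundleWithTwoNeighbors.mk u₁ u₂ w₁ w₂ e₀ e₁ hB hne.symm hse
      hw₁ hw₂ hw).not_gStar hG
  obtain ⟨x, hx₁, hx₂⟩ := Cardinal.exists_ne_ne_of_three_le
    (by rw [← Nat.cast_card]; exact_mod_cast hV) u₁ u₂
  obtain ⟨w, hw⟩ := Multigraph.outerNeighbors_nonempty hconn hx₁ hx₂
  exact Set.ncard_eq_one.2 ⟨w, hsub.eq_singleton_of_mem hw⟩
end

section
/- For every integer k ≥ 2, the sum of C_i · C_j · C_t over all triples of nonnegative integers (i, j, t) with i + j + t = k − 2 equals C_k − C_{k−1}. (Equivalently, in the indexing of the paper: ∑_{v_1 odd, 3 ≤ v_1 ≤ 2k−1} ∑_{v_2 even, v_1 < v_2 ≤ 2k} C_{(v_1−3)/2} · C_{(v_2−v_1−1)/2} · C_{(2k−v_2)/2} = C_k − C_{k−1}.) -/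
/-!
Summing the inner index of the triple convolution with Segner's recurrence
`C_{m+1} = ∑_{j ≤ m} C_j C_{m-j}` turns it into `∑_{i ≤ n} C_i C_{n+1-i}`, which is the
recurrence for `C_{n+2}` with its last term `C_{n+1} C_0 = C_{n+1}` removed.
-/

open Finset

theorem catalan_succ_eq_sum_range (m : ℕ) :
    catalan (m + 1) = ∑ j ∈ range (m + 1), catalan j * catalan (m - j) :=
  (catalan_succ m).trans (sum_range fun j => catalan j * catalan (m - j)).symm

theorem sum_range_catalan_mul_catalan_sub_succ_eq_sub (n : ℕ) :
    ∑ i ∈ range (n + 1), catalan i * catalan (n + 1 - i) = catalan (n + 2) - catalan (n + 1) := by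
  rw [catalan_succ_eq_sum_range (n + 1), sum_range_succ _ (n + 1), Nat.sub_self, catalan_zero, mul_one,
    Nat.add_sub_cancel]

theorem sum_range_sum_range_catalan_mul_catalan_mul_catalan (n : ℕ) :
    ∑ i ∈ range (n + 1), ∑ j ∈ range (n + 1 - i), catalan i * catalan j * catalan (n - i - j) =
      ∑ i ∈ range (n + 1), catalan i * catalan (n + 1 - i) := by
  refine sum_congr rfl fun i hi => ?_
  have hni : n + 1 - i = n - i + 1 := by
    have := mem_range.mp hi
    omega
  simp_rw [hni, catalan_succ_eq_sum_range (n - i), mul_sum, mul_assoc]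

theorem catalan_triple_sum_general (k : ℕ) :
    (∑ i ∈ Finset.range (k - 1), ∑ j ∈ Finset.range (k - 1 - i),
        catalan i * catalan j * catalan (k - 2 - i - j)) =
      catalan k - catalan (k - 1) := by
  match k with
  | 0 | 1 => simp
  | n + 2 =>
    rw [show n + 2 - 1 = n + 1 from rfl, show n + 2 - 2 = n from rfl,
      sum_range_sum_range_catalan_mul_catalan_mul_catalan,
      sum_range_catalan_mul_catalan_sub_succ_eq_sub]

/-- For every `k ≥ 2`, the sum of `C_i · C_j · C_t` over all triples of nonnegative
integers with `i + j + t = k - 2` equals `C_k - C_{k-1}`, where `C` denotes the Catalan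
numbers. -/
theorem catalan_triple_sum (k : ℕ) (hk : 2 ≤ k) :
    (∑ i ∈ Finset.range (k - 1), ∑ j ∈ Finset.range (k - 1 - i),
        catalan i * catalan j * catalan (k - 2 - i - j)) =
      catalan k - catalan (k - 1) :=
  catalan_triple_sum_general k
end
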